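/- arXiv:math/0506119 — 6 statements merged into one kernel-verified Lean document; each statement's English description precedes it below -/
import Mathlib

section
/- Let g ≥ 1 and E_0 < E_1 < ... < E_{2g+1} be real numbers. On each open gap (E_{2k-1}, E_{2k}) the function R^{1/2} is real-valued and nonvanishing. If p is a monic polynomial of degree g with real coefficients such that ∫_{E_{2k-1}}^{E_{2k}} p(λ)/R^{1/2}(λ) dλ = 0 for every k = 1,...,g, then p has exactly one zero, which is simple, in each open gap (E_{2k-1}, E_{2k}); in particular all zeros of p are real. -/
/-!
On a gap `(E (2k-1), E (2k))` exactly `2 (g + 1 - k)` of the factors `x - E j` are negative, and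
each contributes a factor `I` to its principal square root; so `R^{1/2}` is real there, equal to
`±∏ √|x - E j|`. Near the ends of the gap it is `√(x - E (2k-1)) * √(E (2k) - x)` times a
continuous nonvanishing function, and `1 / √((x - a) (b - x))` is integrable, being the
nonnegative derivative of `arcsin ((2x - a - b) / (b - a))`. Hence if `p` had no zero in the gap,
`p / R^{1/2}` would be integrable of constant sign there and its integral could not vanish. So `p`
has a zero in each of the `g` disjoint gaps; being monic of degree `g`, it is the product of the
corresponding linear factors, which gives uniqueness, simplicity and reality of its zeros.
-/

open MeasureTheory Filter

open Set Real Complex Polynomial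

theorem ofReal_cpow_one_half (r : ℝ) :
    (r : ℂ) ^ (1 / 2 : ℂ) = √|r| * if 0 ≤ r then 1 else I := by
  split_ifs with hr
  · rw [mul_one, abs_of_nonneg hr, sqrt_eq_rpow, ofReal_cpow hr]
    norm_num
  · push Not at hr
    rw [ofReal_cpow_of_nonpos hr.le, abs_of_neg hr, sqrt_eq_rpow, ← ofReal_neg,
      ofReal_cpow (neg_nonneg.2 hr.le), show (π : ℂ) * I * (1 / 2) = π / 2 * I by ring,
      exp_pi_div_two_mul_I]
    norm_num

theorem prod_range_ite_lt_one_I (i N : ℕ) (hiN : i ≤ N) :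
    ∏ j ∈ Finset.range N, (if j < i then 1 else I) = I ^ (N - i) := by
  rw [← Finset.prod_range_mul_prod_Ico _ hiN,
    Finset.prod_congr rfl fun j hj => if_pos (Finset.mem_range.1 hj),
    Finset.prod_congr rfl fun j hj => if_neg (Finset.mem_Ico.1 hj).1.not_gt]
  simp

theorem prod_ofReal_sub_cpow_one_half {E : ℕ → ℝ} {x : ℝ} {i N : ℕ} (hiN : i ≤ N)
    (hE : ∀ j < N, E j ≤ x ↔ j < i) :
    ∏ j ∈ Finset.range N, ((x : ℂ) - E j) ^ (1 / 2 : ℂ) =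
      ((∏ j ∈ Finset.range N, √|x - E j| : ℝ) : ℂ) * I ^ (N - i) := by
  have hfactor : ∀ j ∈ Finset.range N, ((x : ℂ) - E j) ^ (1 / 2 : ℂ) =
      √|x - E j| * if j < i then 1 else I := by
    intro j hj
    simp only [← ofReal_sub, ofReal_cpow_one_half, sub_nonneg, hE j (Finset.mem_range.1 hj)]
  rw [Finset.prod_congr rfl hfactor, Finset.prod_mul_distrib, ofReal_prod,
    prod_range_ite_lt_one_I i N hiN]

theorem intervalIntegrable_one_div_sqrt_mul_sqrt {a b : ℝ} (hab : a < b) :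
    IntervalIntegrable (fun x => 1 / (√(x - a) * √(b - x))) volume a b := by
  have hba : 0 < b - a := sub_pos.2 hab
  set u : ℝ → ℝ := fun x => (2 * x - a - b) / (b - a)
  have hu : ∀ x, 1 - u x ^ 2 = (2 / (b - a)) ^ 2 * ((x - a) * (b - x)) := by
    intro x; simp only [u]; field_simp; ring
  have hderiv : ∀ x ∈ Ioo a b, HasDerivAt (fun x => arcsin (u x))
      (1 / (√(x - a) * √(b - x))) x := by
    rintro x ⟨hax, hxb⟩
    have hux : 0 < 1 - u x ^ 2 := by
      rw [hu]; have := sub_pos.2 hax; have := sub_pos.2 hxb; positivity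
    have hu1 : u x ≠ -1 := fun h => by rw [h] at hux; norm_num at hux
    have hu2 : u x ≠ 1 := fun h => by rw [h] at hux; norm_num at hux
    have hdu : HasDerivAt u (2 / (b - a)) x := by
      simpa using (((hasDerivAt_id x).const_mul 2).sub_const a |>.sub_const b).div_const (b - a)
    refine ((hasDerivAt_arcsin hu1 hu2).comp x hdu).congr_deriv ?_
    rw [hu, sqrt_mul (by positivity), sqrt_sq (by positivity), sqrt_mul (sub_pos.2 hax).le]
    field_simp
  rw [intervalIntegrable_iff_integrableOn_Ioc_of_le hab.le]
  refine intervalIntegral.integrableOn_deriv_of_nonneg (by fun_prop) hderiv fun x _ => by positivity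

theorem IsPreconnected.pos_or_neg_of_ne_zero {X : Type*} [TopologicalSpace X] {s : Set X}
    (hs : IsPreconnected s) {f : X → ℝ} (hf : ContinuousOn f s) (h0 : ∀ x ∈ s, f x ≠ 0) :
    (∀ x ∈ s, 0 < f x) ∨ (∀ x ∈ s, f x < 0) := by
  by_contra! h
  obtain ⟨⟨x, hx, hfx⟩, ⟨y, hy, hfy⟩⟩ := h
  obtain ⟨z, hz, hfz⟩ := hs.intermediate_value hx hy hf ⟨hfx, hfy⟩
  exact h0 z hz hfz

theorem integral_div_sqrt_mul_sqrt_pos {a b : ℝ} (hab : a < b) {ψ : ℝ → ℝ}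
    (hψ : ContinuousOn ψ (Icc a b)) (hpos : ∀ x ∈ Ioo a b, 0 < ψ x) :
    0 < ∫ x in a..b, ψ x / (√(x - a) * √(b - x)) := by
  refine intervalIntegral.intervalIntegral_pos_of_pos_on ?_ (fun x hx => ?_) hab
  · simpa only [mul_one_div] using (intervalIntegrable_one_div_sqrt_mul_sqrt hab).continuousOn_mul
      (uIcc_of_le hab.le ▸ hψ)
  · have := sub_pos.2 hx.1
    have := sub_pos.2 hx.2
    have := hpos x hx
    positivity

theorem exists_eq_zero_of_integral_div_sqrt_mul_sqrt_eq_zero {a b : ℝ} (hab : a < b)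
    {ψ : ℝ → ℝ} (hψ : ContinuousOn ψ (Icc a b))
    (h : ∫ x in a..b, ψ x / (√(x - a) * √(b - x)) = 0) : ∃ x ∈ Ioo a b, ψ x = 0 := by
  by_contra! hne
  rcases isPreconnected_Ioo.pos_or_neg_of_ne_zero (hψ.mono Ioo_subset_Icc_self) hne
    with hpos | hneg
  · exact (integral_div_sqrt_mul_sqrt_pos hab hψ hpos).ne' h
  · have := integral_div_sqrt_mul_sqrt_pos hab hψ.neg fun x hx => neg_pos.2 (hneg x hx)
    simp only [Pi.neg_apply, neg_div, intervalIntegral.integral_neg, h, neg_zero] at this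
    exact this.false

theorem exists_eq_zero_of_integral_div_eq_zero {a b : ℝ} (hab : a < b) {φ T f : ℝ → ℝ}
    (hφ : ContinuousOn φ (Icc a b)) (hT : ContinuousOn T (Icc a b))
    (hT0 : ∀ x ∈ Icc a b, T x ≠ 0) (hf : ∀ x ∈ Ioo a b, f x = √(x - a) * √(b - x) * T x)
    (h : ∫ x in a..b, φ x / f x = 0) : ∃ x ∈ Ioo a b, φ x = 0 := by
  have hψ : ∫ x in a..b, (φ / T) x / (√(x - a) * √(b - x)) = 0 := by
    rw [← h]
    refine intervalIntegral.integral_congr_Ioo_of_le hab.le fun x hx => ?_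
    rw [hf x hx, Pi.div_apply, div_div, mul_comm]
  obtain ⟨x, hx, hφx⟩ := exists_eq_zero_of_integral_div_sqrt_mul_sqrt_eq_zero hab (hφ.div hT hT0) hψ
  exact ⟨x, hx, (div_eq_zero_iff.1 hφx).resolve_right (hT0 x (Ioo_subset_Icc_self hx))⟩

section StrictMonoOn

variable {β : Type*} [Preorder β] {E : ℕ → β} {n i j : ℕ} {x : β}

theorem StrictMonoOn.lt_of_mem_Ioo_of_lt (hE : StrictMonoOn E (Iic n)) (hi : i ≤ n)
    (hx : x ∈ Ioo (E (i - 1)) (E i)) (hji : j < i) : E j < x :=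
  (hE.monotoneOn (by simp; omega) (by simp; omega) (by omega : j ≤ i - 1)).trans_lt hx.1

theorem StrictMonoOn.lt_of_mem_Ioo_of_le (hE : StrictMonoOn E (Iic n)) (hj : j ≤ n)
    (hx : x ∈ Ioo (E (i - 1)) (E i)) (hij : i ≤ j) : x < E j :=
  hx.2.trans_le (hE.monotoneOn (by simp; omega) (by simpa) hij)

theorem StrictMonoOn.le_iff_lt_of_mem_Ioo (hE : StrictMonoOn E (Iic n)) (hi : i ≤ n) (hj : j ≤ n)
    (hx : x ∈ Ioo (E (i - 1)) (E i)) :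
    E j ≤ x ↔ j < i :=
  ⟨fun h => by_contra fun hij =>
      lt_irrefl x ((hE.lt_of_mem_Ioo_of_le hj hx (not_lt.1 hij)).trans_le h),
    fun h => (hE.lt_of_mem_Ioo_of_lt hi hx h).le⟩

theorem StrictMonoOn.ne_of_mem_Ioo (hE : StrictMonoOn E (Iic n)) (hi : i ≤ n) (hj : j ≤ n)
    (hx : x ∈ Ioo (E (i - 1)) (E i)) :
    E j ≠ x := by
  rcases lt_or_ge j i with hji | hij
  · exact (hE.lt_of_mem_Ioo_of_lt hi hx hji).ne
  · exact (hE.lt_of_mem_Ioo_of_le hj hx hij).ne'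

end StrictMonoOn

section Gap

variable {g k : ℕ} {E : ℕ → ℝ}

theorem eq_of_mem_gap_of_mem_gap (hE : StrictMonoOn E (Iic (2 * g + 1))) {k' : ℕ}
    (hk : k ≤ g) (hk' : k' ≤ g) {x : ℝ} (hx : x ∈ Ioo (E (2 * k - 1)) (E (2 * k)))
    (hx' : x ∈ Ioo (E (2 * k' - 1)) (E (2 * k'))) : k = k' := by
  have h₁ := (hE.le_iff_lt_of_mem_Ioo (by omega) (by omega) hx').1 hx.1.le
  have h₂ := (hE.le_iff_lt_of_mem_Ioo (by omega) (by omega) hx).1 hx'.1.le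
  omega

theorem neg_prod_cpow_one_half_of_mem_gap (hE : StrictMonoOn E (Iic (2 * g + 1))) (hkg : k ≤ g)
    {x : ℝ} (hx : x ∈ Ioo (E (2 * k - 1)) (E (2 * k))) :
    -∏ j ∈ Finset.range (2 * g + 2), ((x : ℂ) - E j) ^ (1 / 2 : ℂ) =
      ((-(-1) ^ (g + 1 - k) * ∏ j ∈ Finset.range (2 * g + 2), √|x - E j| : ℝ) : ℂ) := by
  rw [prod_ofReal_sub_cpow_one_half (i := 2 * k) (by omega)
      fun j hj => hE.le_iff_lt_of_mem_Ioo (by omega) (by omega) hx,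
    show 2 * g + 2 - 2 * k = 2 * (g + 1 - k) by omega, pow_mul, I_sq]
  push_cast
  ring

theorem prod_sqrt_abs_sub_eq {N a b : ℕ} (hab : a ≠ b) (ha : a < N) (hb : b < N) {x : ℝ}
    (hx : x ∈ Icc (E a) (E b)) :
    ∏ j ∈ Finset.range N, √|x - E j| =
      √(x - E a) * √(E b - x) * ∏ j ∈ Finset.range N \ {a, b}, √|x - E j| := by
  rw [← Finset.prod_sdiff (s₁ := {a, b}) (by simp [Finset.insert_subset_iff, ha, hb]),
    Finset.prod_pair hab, abs_of_nonneg (sub_nonneg.2 hx.1), abs_of_nonpos (sub_nonpos.2 hx.2),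
    neg_sub]
  ring

theorem exists_eq_zero_of_integral_div_neg_prod_cpow_eq_zero
    (hE : StrictMonoOn E (Iic (2 * g + 1))) (hk1 : 1 ≤ k) (hkg : k ≤ g) {φ : ℝ → ℝ}
    (hφ : Continuous φ)
    (h : ∫ x in E (2 * k - 1)..E (2 * k),
      φ x / (-∏ j ∈ Finset.range (2 * g + 2), ((x : ℂ) - E j) ^ (1 / 2 : ℂ)).re = 0) :
    ∃ x ∈ Ioo (E (2 * k - 1)) (E (2 * k)), φ x = 0 := by
  have hmem : ∀ {j}, j ≤ 2 * g + 1 → j ∈ Iic (2 * g + 1) := fun hj => hj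
  refine exists_eq_zero_of_integral_div_eq_zero (hE (hmem (by omega)) (hmem (by omega)) (by omega))
    hφ.continuousOn (T := fun x => -(-1) ^ (g + 1 - k) *
      ∏ j ∈ Finset.range (2 * g + 2) \ {2 * k - 1, 2 * k}, √|x - E j|) (by fun_prop) ?_ ?_ h
  · intro x hx
    refine mul_ne_zero (by simp) (Finset.prod_ne_zero_iff.2 fun j hj => ?_)
    simp only [Finset.mem_sdiff, Finset.mem_range, Finset.mem_insert, Finset.mem_singleton,
      not_or] at hj
    rw [sqrt_ne_zero', abs_pos, sub_ne_zero]
    rcases lt_or_gt_of_ne hj.2.1 with hj' | hj'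
    · exact (hx.1.trans_lt' (hE (hmem (by omega)) (hmem (by omega)) hj')).ne'
    · exact (hx.2.trans_lt (hE (hmem (by omega)) (hmem (by omega)) (by omega))).ne
  · intro x hx
    rw [neg_prod_cpow_one_half_of_mem_gap hE hkg hx, ofReal_re,
      prod_sqrt_abs_sub_eq (by omega) (by omega) (by omega) (Ioo_subset_Icc_self hx)]
    ring

end Gap

theorem Polynomial.eq_prod_X_sub_C_of_isRoot {K ι : Type*} [Field K] {p : K[X]}
    {s : Finset ι} {r : ι → K} (hr : InjOn r s) (hp : p.Monic) (hdeg : p.natDegree = s.card)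
    (hroot : ∀ i ∈ s, p.IsRoot (r i)) : p = ∏ i ∈ s, (X - C (r i)) := by
  have hdvd : ∏ i ∈ s, (X - C (r i)) ∣ p :=
    Finset.prod_dvd_of_coprime
      (fun i hi j hj hij => isCoprime_X_sub_C_of_isUnit_sub
        (sub_ne_zero.2 fun h => hij (hr hi hj h)).isUnit)
      fun i hi => dvd_iff_isRoot.2 (hroot i hi)
  refine (eq_of_dvd_of_natDegree_le_of_leadingCoeff hdvd ?_ ?_).symm
  · rw [hdeg, natDegree_prod_of_monic _ _ fun i _ => monic_X_sub_C (r i)]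
    simp
  · rw [hp.leadingCoeff, (monic_prod_of_monic _ _ fun i _ => monic_X_sub_C (r i)).leadingCoeff]

theorem stmt_1_general
    (g : ℕ)
    (E : ℕ → ℝ) (hE : ∀ j, j < 2*g+1 → E j < E (j+1))
    (Rhalf : ℂ → ℂ)
    (hRhalf : ∀ z : ℂ, Rhalf z = -∏ j ∈ Finset.range (2*g+2), (z - (E j : ℂ)) ^ ((1:ℂ)/2)) :
    (∀ k, 1 ≤ k → k ≤ g → ∀ x ∈ Set.Ioo (E (2*k-1)) (E (2*k)),
      (Rhalf (x : ℂ)).im = 0 ∧ Rhalf (x : ℂ) ≠ 0) ∧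
    (∀ p : Polynomial ℝ, p.Monic → p.natDegree = g →
      (∀ k, 1 ≤ k → k ≤ g →
        ∫ x in (E (2*k-1))..(E (2*k)), p.eval x / (Rhalf (x : ℂ)).re = 0) →
      ((∀ k, 1 ≤ k → k ≤ g →
          ∃! x : ℝ, x ∈ Set.Ioo (E (2*k-1)) (E (2*k)) ∧ p.IsRoot x) ∧
       (∀ k, 1 ≤ k → k ≤ g → ∀ x ∈ Set.Ioo (E (2*k-1)) (E (2*k)),
          p.IsRoot x → p.derivative.eval x ≠ 0) ∧
       (∀ z : ℂ, (p.map (algebraMap ℝ ℂ)).IsRoot z → z.im = 0))) := by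
  have hmono : StrictMonoOn E (Iic (2 * g + 1)) := strictMonoOn_Iic_of_lt_succ hE
  refine ⟨fun k _ hkg x hx => ?_, fun p hp hdeg hint => ?_⟩
  · rw [hRhalf, neg_prod_cpow_one_half_of_mem_gap hmono hkg hx, ofReal_im, ne_eq, ofReal_eq_zero]
    refine ⟨rfl, mul_ne_zero (by simp) (Finset.prod_ne_zero_iff.2 fun j hj => ?_)⟩
    rw [sqrt_ne_zero', abs_pos, sub_ne_zero]
    exact (hmono.ne_of_mem_Ioo (by omega) (by simp at hj; omega) hx).symm
  have hroot : ∀ k ∈ Finset.Icc 1 g, ∃ x ∈ Ioo (E (2 * k - 1)) (E (2 * k)), p.IsRoot x :=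
    fun k hk => exists_eq_zero_of_integral_div_neg_prod_cpow_eq_zero hmono
      (Finset.mem_Icc.1 hk).1 (Finset.mem_Icc.1 hk).2 p.continuous
      (by simpa only [hRhalf] using hint k (Finset.mem_Icc.1 hk).1 (Finset.mem_Icc.1 hk).2)
  choose! r hr hroot using hroot
  have hinj : InjOn r (Finset.Icc 1 g) := fun k hk k' hk' h =>
    eq_of_mem_gap_of_mem_gap hmono (Finset.mem_Icc.1 hk).2 (Finset.mem_Icc.1 hk').2 (hr k hk)
      (h ▸ hr k' hk')
  have hp_eq := eq_prod_X_sub_C_of_isRoot hinj hp (by simp [hdeg]) hroot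
  refine ⟨fun k hk1 hkg => ?_, ?_, ?_⟩
  · have hk : k ∈ Finset.Icc 1 g := Finset.mem_Icc.2 ⟨hk1, hkg⟩
    refine ⟨r k, ⟨hr k hk, hroot k hk⟩, fun y ⟨hy, hyroot⟩ => ?_⟩
    rw [hp_eq, isRoot_prod] at hyroot
    obtain ⟨k', hk', hy'⟩ := hyroot
    rw [root_X_sub_C] at hy'
    obtain rfl := eq_of_mem_gap_of_mem_gap hmono hkg (Finset.mem_Icc.1 hk').2 hy (hy' ▸ hr k' hk')
    exact hy'.symm
  · intro k _ _ x _ hx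
    rw [hp_eq] at hx ⊢
    exact (separable_prod_X_sub_C_iff'.2 hinj).eval₂_derivative_ne_zero (RingHom.id ℝ) hx
  · intro z hz
    rw [hp_eq, Polynomial.map_prod, isRoot_prod] at hz
    obtain ⟨k, -, hk⟩ := hz
    simp only [Polynomial.map_sub, map_X, map_C, root_X_sub_C] at hk
    rw [← hk]
    simp

theorem stmt_1
    (g : ℕ) (hg : 1 ≤ g)
    (E : ℕ → ℝ) (hE : ∀ j, j < 2*g+1 → E j < E (j+1))
    (Rhalf : ℂ → ℂ)
    (hRhalf : ∀ z : ℂ, Rhalf z = -∏ j ∈ Finset.range (2*g+2), (z - (E j : ℂ)) ^ ((1:ℂ)/2)) :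
    (∀ k, 1 ≤ k → k ≤ g → ∀ x ∈ Set.Ioo (E (2*k-1)) (E (2*k)),
      (Rhalf (x : ℂ)).im = 0 ∧ Rhalf (x : ℂ) ≠ 0) ∧
    (∀ p : Polynomial ℝ, p.Monic → p.natDegree = g →
      (∀ k, 1 ≤ k → k ≤ g →
        ∫ x in (E (2*k-1))..(E (2*k)), p.eval x / (Rhalf (x : ℂ)).re = 0) →
      ((∀ k, 1 ≤ k → k ≤ g →
          ∃! x : ℝ, x ∈ Set.Ioo (E (2*k-1)) (E (2*k)) ∧ p.IsRoot x) ∧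
       (∀ k, 1 ≤ k → k ≤ g → ∀ x ∈ Set.Ioo (E (2*k-1)) (E (2*k)),
          p.IsRoot x → p.derivative.eval x ≠ 0) ∧
       (∀ z : ℂ, (p.map (algebraMap ℝ ℂ)).IsRoot z → z.im = 0))) :=
  stmt_1_general g E hE Rhalf hRhalf
end

section
/- Assume the short-range condition. Fix z ∈ ℂ and w ∈ ℂ with 0 < |w| ≤ 1, and suppose either (i) there exist solutions ψ_{q,±} of τ_q u = z u of the form ψ_{q,±}(n) = θ_±(n) w^{±n} with 0 < inf_n |θ_±(n)| ≤ sup_n |θ_±(n)| < ∞ and W_q(ψ_{q,-}, ψ_{q,+}) ≠ 0; or (ii) |w| = 1 and there exists a solution ψ_{q,+} = ψ_{q,-} =: φ of τ_q u = z u with φ(n) = θ(n) w^n, 0 < inf_n |θ(n)| ≤ sup_n |θ(n)| < ∞, together with a second solution φ̂(n) = φ(n)(θ̂(n) + n) with θ̂ bounded and W_q(φ, φ̂) ≠ 0. Then there exist solutions ψ_+ and ψ_- of the perturbed equation τ u = z u such that lim_{n→+∞} |w^{-n}(ψ_+(n) - ψ_{q,+}(n))| = 0 and lim_{n→-∞}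 |w^{n}(ψ_-(n) - ψ_{q,-}(n))| = 0. -/
/-!
Let `u = ψ_{q,+}` and let `v` be a second solution of `τ_q y = z y` with `W(u, v) ≠ 0`
(`ψ_{q,-}` in case (i), `φ̂` in case (ii)), so that `|u n| ≤ D |w|^n` and
`|v n| ≤ D (1 + |n|) |w|^(-n)` for `n ≥ 0`. Then `ψ_+` is the solution of the
discrete variation-of-constants equation
`ψ n = u n + ∑_{m > n} (v n u m - u n v m) ((τ - τ_q) ψ) m / W(u, v)`.
For `m > n ≥ 0` the kernel `w^(-n) (v n u m - u n v m) w^m` is `O(1 + m)`, so the first moment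
`∑ (1 + |m|) (|a m - a_q m| + |b m - b_q m|) < ∞` makes the equation for `w^(-n) ψ n` a
contraction on bounded sequences on `[n₀, ∞)` once `n₀` is large. The fixed point solves
`τ ψ = z ψ` above `n₀`, the recursion (`a ≠ 0`) continues it to all of `ℤ`, and
`w^(-n) (ψ n - u n)` is bounded by a tail of the convergent moment series. The solution `ψ_-`
comes from the same construction after the reflection `n ↦ -n`.
-/

open Filter Topology BoundedContinuousFunction

namespace JacobiOperator

def jacobi (a b : ℤ → ℝ) (u : ℤ → ℂ) (n : ℤ) : ℂ :=
  a n * u (n + 1) + a (n - 1) * u (n - 1) + b n * u n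

def wronskian (a : ℤ → ℝ) (u v : ℤ → ℂ) (n : ℤ) : ℂ :=
  a n * (u n * v (n + 1) - u (n + 1) * v n)

section Jacobi

variable {a b : ℤ → ℝ}

lemma jacobi_add (u v : ℤ → ℂ) (n : ℤ) :
    jacobi a b (u + v) n = jacobi a b u n + jacobi a b v n := by
  simp only [jacobi, Pi.add_apply]
  ring

lemma jacobi_congr {u v : ℤ → ℂ} {n : ℤ} (h : ∀ j, n - 1 ≤ j → j ≤ n + 1 → u j = v j) :
    jacobi a b u n = jacobi a b v n := by
  simp only [jacobi, h n (by omega) (by omega), h (n + 1) (by omega) le_rfl,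
    h (n - 1) le_rfl (by omega)]

end Jacobi

section Wronskian

variable {a b : ℤ → ℝ} {z : ℂ} {u v : ℤ → ℂ}

lemma wronskian_swap (n : ℤ) : wronskian a v u n = -wronskian a u v n := by
  unfold wronskian; ring

lemma wronskian_sub_wronskian_sub_one (n : ℤ) :
    wronskian a u v n - wronskian a u v (n - 1) = u n * jacobi a b v n - v n * jacobi a b u n := by
  simp only [wronskian, jacobi, sub_add_cancel]
  ring

lemma wronskian_eq_wronskian_zero (hu : ∀ n, jacobi a b u n = z * u n)
    (hv : ∀ n, jacobi a b v n = z * v n) (n : ℤ) : wronskian a u v n = wronskian a u v 0 := by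
  have step (n : ℤ) : wronskian a u v n = wronskian a u v (n - 1) := by
    rw [← sub_eq_zero, wronskian_sub_wronskian_sub_one (b := b), hu, hv]
    ring
  induction n using Int.induction_on with
  | zero => rfl
  | succ k ih => rw [step, add_sub_cancel_right, ih]
  | pred k ih => rw [← ih, step (-k), sub_eq_add_neg]

end Wronskian

/-- The value at `n₀ + 1 - j` of the solution of `jacobi a b ψ = z ψ` with `ψ (n₀ + 1) = c₀`
and `ψ n₀ = c₁`. -/
noncomputable def downwardSolution (a b : ℤ → ℝ) (z : ℂ) (n₀ : ℤ) (c₀ c₁ : ℂ) : ℕ → ℂ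
  | 0 => c₀
  | 1 => c₁
  | j + 2 => ((z - b (n₀ - j)) * downwardSolution a b z n₀ c₀ c₁ (j + 1)
      - a (n₀ - j) * downwardSolution a b z n₀ c₀ c₁ j) / a (n₀ - j - 1)

lemma exists_solution_extending {a b : ℤ → ℝ} (ha : ∀ n, a n ≠ 0) {z : ℂ} {n₀ : ℤ} {ψ : ℤ → ℂ}
    (hψ : ∀ n, n₀ < n → jacobi a b ψ n = z * ψ n) :
    ∃ ψ' : ℤ → ℂ, (∀ n, jacobi a b ψ' n = z * ψ' n) ∧ ∀ n, n₀ ≤ n → ψ' n = ψ n := by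
  set c := downwardSolution a b z n₀ (ψ (n₀ + 1)) (ψ n₀)
  set ψ' : ℤ → ℂ := fun n => if n₀ ≤ n then ψ n else c (n₀ + 1 - n).toNat
  have hψ'c : ∀ j : ℕ, ψ' (n₀ + 1 - j) = c j := by
    rintro (_ | _ | j)
    · simp [ψ', c, downwardSolution]
    · simp [ψ', c, downwardSolution]
    · have hj : ¬ n₀ ≤ n₀ + 1 - ((j + 2 : ℕ) : ℤ) := by omega
      simp only [ψ', if_neg hj, sub_sub_cancel, Int.toNat_natCast]
  refine ⟨ψ', fun n => ?_, fun n hn => if_pos hn⟩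
  rcases lt_or_ge n₀ n with hn | hn
  · have h := hψ n hn
    simp only [jacobi] at h ⊢
    simp only [ψ', if_pos (by omega : n₀ ≤ n + 1), if_pos (by omega : n₀ ≤ n - 1),
      if_pos hn.le]
    exact h
  · obtain ⟨j, rfl⟩ : ∃ j : ℕ, n = n₀ - j := ⟨(n₀ - n).toNat, by omega⟩
    have h₀ := hψ'c j
    have h₁ := hψ'c (j + 1)
    have h₂ := hψ'c (j + 2)
    rw [show n₀ + 1 - (j : ℤ) = n₀ - j + 1 by ring] at h₀
    rw [show n₀ + 1 - ((j + 1 : ℕ) : ℤ) = n₀ - j by push_cast; ring] at h₁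
    rw [show n₀ + 1 - ((j + 2 : ℕ) : ℤ) = n₀ - j - 1 by push_cast; ring] at h₂
    simp only [jacobi, h₀, h₁, h₂, c, downwardSolution]
    rw [mul_div_cancel₀ _ (by exact_mod_cast ha _)]
    ring

def reflect (a : ℤ → ℝ) (n : ℤ) : ℝ := a (-n - 1)

section Reflection

variable (a b : ℤ → ℝ) (u v : ℤ → ℂ)

lemma jacobi_comp_neg (n : ℤ) :
    jacobi (reflect a) (b ∘ Neg.neg) (u ∘ Neg.neg) n = jacobi a b u (-n) := by
  simp only [jacobi, reflect, Function.comp_apply]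
  ring_nf

lemma wronskian_comp_neg (n : ℤ) :
    wronskian (reflect a) (u ∘ Neg.neg) (v ∘ Neg.neg) n = -wronskian a u v (-n - 1) := by
  simp only [wronskian, reflect, Function.comp_apply]
  ring_nf

end Reflection

def jacobiRowDist (a aq b bq : ℤ → ℝ) (n : ℤ) : ℝ :=
  |a n - aq n| + |a (n - 1) - aq (n - 1)| + |b n - bq n|

lemma jacobiRowDist_reflect (a aq b bq : ℤ → ℝ) (n : ℤ) :
    jacobiRowDist (reflect a) (reflect aq) (b ∘ Neg.neg) (bq ∘ Neg.neg) n
      = jacobiRowDist a aq b bq (-n) := by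
  simp only [jacobiRowDist, reflect, Function.comp_apply]
  ring_nf

section TailSum

variable {E : Type*} [NormedAddCommGroup E]

noncomputable def tailSum (g : ℤ → E) (n : ℤ) : E := ∑' k : ℕ, g (n + 1 + k)

lemma tailSum_sub_one {g : ℤ → E} {n : ℤ} (hg : Summable fun k : ℕ => g (n + k)) :
    tailSum g (n - 1) = g n + tailSum g n := by
  simp only [tailSum, sub_add_cancel]
  rw [hg.tsum_eq_zero_add]
  push_cast
  simp only [add_zero, add_comm, add_left_comm]

lemma tendsto_tailSum (g : ℤ → E) : Tendsto (tailSum g) atTop (𝓝 0) := by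
  have h := (tendsto_sum_nat_add fun k : ℕ => g (k + 1 : ℕ)).comp
    (tendsto_atTop_atTop.2 fun k => ⟨k, fun n hn => by omega⟩ : Tendsto Int.toNat atTop atTop)
  refine h.congr' ?_
  filter_upwards [eventually_ge_atTop 0] with n hn
  simp only [Function.comp_apply, tailSum]
  congr with k
  push_cast
  rw [Int.toNat_of_nonneg hn]
  ring_nf

end TailSum

section Volterra

variable {aq bq : ℤ → ℝ} {z : ℂ} {u v : ℤ → ℂ}

noncomputable def volterra (aq : ℤ → ℝ) (u v f : ℤ → ℂ) (n : ℤ) : ℂ :=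
  (v n * tailSum (u * f) n - u n * tailSum (v * f) n) / wronskian aq u v 0

lemma jacobi_volterra (hu : ∀ n, jacobi aq bq u n = z * u n)
    (hv : ∀ n, jacobi aq bq v n = z * v n) (hW : wronskian aq u v 0 ≠ 0) {f : ℤ → ℂ} {n : ℤ}
    (hsu : Summable fun k : ℕ => (u * f) (n + k)) (hsv : Summable fun k : ℕ => (v * f) (n + k)) :
    jacobi aq bq (volterra aq u v f) n = z * volterra aq u v f n - f n := by
  have tail_succ {g : ℤ → ℂ} (hg : Summable fun k : ℕ => g (n + k)) :
      tailSum g n = g (n + 1) + tailSum g (n + 1) := by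
    rw [← tailSum_sub_one, add_sub_cancel_right]
    convert (summable_nat_add_iff 1).2 hg using 3 with k
    push_cast; ring
  have e₁ := tail_succ hsu
  have e₂ := tail_succ hsv
  have e₃ := tailSum_sub_one hsu
  have e₄ := tailSum_sub_one hsv
  have hW' := wronskian_eq_wronskian_zero hu hv (n - 1)
  have hun := hu n
  have hvn := hv n
  simp only [jacobi, volterra]
  set W := wronskian aq u v 0
  simp only [jacobi, wronskian, Pi.mul_apply, sub_add_cancel] at e₁ e₂ e₃ e₄ hW' hun hvn
  field_simp
  linear_combination -aq n * v (n + 1) * e₁ + aq n * u (n + 1) * e₂ + aq (n - 1) * v (n - 1) * e₃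
    - aq (n - 1) * u (n - 1) * e₄ + tailSum (u * f) n * hvn - tailSum (v * f) n * hun
    - f n * hW'

lemma volterra_sub {f g : ℤ → ℂ} {n : ℤ} (huf : Summable fun k : ℕ => (u * f) (n + 1 + k))
    (hug : Summable fun k : ℕ => (u * g) (n + 1 + k))
    (hvf : Summable fun k : ℕ => (v * f) (n + 1 + k))
    (hvg : Summable fun k : ℕ => (v * g) (n + 1 + k)) :
    volterra aq u v f n - volterra aq u v g n = volterra aq u v (f - g) n := by
  have hsub (x : ℤ → ℂ) : x * (f - g) = x * f - x * g := mul_sub x f g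
  simp only [volterra, tailSum, hsub, Pi.sub_apply, huf.tsum_sub hug, hvf.tsum_sub hvg]
  ring

end Volterra

section Estimates

variable {w : ℂ} {D : ℝ} {u v : ℤ → ℂ}

lemma norm_le_one_add_abs_mul_zpow_neg (hw0 : 0 < ‖w‖) (hw1 : ‖w‖ ≤ 1)
    (hu : ∀ n, 0 ≤ n → ‖u n‖ ≤ D * ‖w‖ ^ n) :
    ∀ n, 0 ≤ n → ‖u n‖ ≤ D * (1 + |(n : ℝ)|) * ‖w‖ ^ (-n) := by
  intro n hn
  have hD : 0 ≤ D := by simpa using (norm_nonneg _).trans (hu 0 le_rfl)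
  calc ‖u n‖ ≤ D * 1 * ‖w‖ ^ n := by simpa using hu n hn
    _ ≤ D * (1 + |(n : ℝ)|) * ‖w‖ ^ (-n) := by
      gcongr D * ?_ * ?_
      · linarith [abs_nonneg (n : ℝ)]
      · exact zpow_le_zpow_right_of_le_one₀ hw0 hw1 (by omega)

lemma norm_mul_le_of_zpow_bounds (hw0 : 0 < ‖w‖) {m : ℤ} {x y : ℂ} {c : ℝ}
    (hx : ‖x‖ ≤ D * (1 + |(m : ℝ)|) * ‖w‖ ^ (-m)) (hy : ‖y‖ ≤ c * ‖w‖ ^ (m - 1)) :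
    ‖x * y‖ ≤ D / ‖w‖ * ((1 + |(m : ℝ)|) * c) := by
  calc ‖x * y‖ ≤ D * (1 + |(m : ℝ)|) * ‖w‖ ^ (-m) * (c * ‖w‖ ^ (m - 1)) := by
        rw [norm_mul]
        exact mul_le_mul hx hy (norm_nonneg _) ((norm_nonneg _).trans hx)
    _ = D * (1 + |(m : ℝ)|) * c * (‖w‖ ^ (-m) * ‖w‖ ^ (m - 1)) := by ring
    _ = D / ‖w‖ * ((1 + |(m : ℝ)|) * c) := by
      rw [← zpow_add₀ hw0.ne', show -m + (m - 1) = -1 by ring, zpow_neg_one]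
      ring

lemma norm_kernel_le (hw0 : 0 < ‖w‖) (hw1 : ‖w‖ ≤ 1)
    (hu : ∀ n, 0 ≤ n → ‖u n‖ ≤ D * ‖w‖ ^ n)
    (hv : ∀ n, 0 ≤ n → ‖v n‖ ≤ D * (1 + |(n : ℝ)|) * ‖w‖ ^ (-n)) {N m : ℤ} (hN : 0 ≤ N)
    (hNm : N ≤ m) :
    ‖w ^ (-N) * (v N * u m - u N * v m)‖ ≤ 2 * D ^ 2 * (1 + |(m : ℝ)|) * ‖w‖ ^ (-m) := by
  have hD : 0 ≤ D := by simpa using (norm_nonneg _).trans (hu 0 le_rfl)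
  have habs : |(N : ℝ)| ≤ |(m : ℝ)| := abs_le_abs_of_nonneg (by exact_mod_cast hN)
    (by exact_mod_cast hNm)
  have hpow (i j : ℤ) : ‖w‖ ^ i * ‖w‖ ^ j = ‖w‖ ^ (i + j) := (zpow_add₀ hw0.ne' i j).symm
  have h₁ : ‖w‖ ^ (-N) * (‖v N‖ * ‖u m‖) ≤ D ^ 2 * (1 + |(m : ℝ)|) * ‖w‖ ^ (-m) :=
    calc ‖w‖ ^ (-N) * (‖v N‖ * ‖u m‖)
        ≤ ‖w‖ ^ (-N) * (D * (1 + |(N : ℝ)|) * ‖w‖ ^ (-N) * (D * ‖w‖ ^ m)) := by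
          gcongr
          exacts [hv N hN, hu m (hN.trans hNm)]
      _ = D ^ 2 * (1 + |(N : ℝ)|) * ‖w‖ ^ (m - 2 * N) := by
          rw [show m - 2 * N = -N + (-N + m) by ring, ← hpow, ← hpow]; ring
      _ ≤ D ^ 2 * (1 + |(m : ℝ)|) * ‖w‖ ^ (-m) := by
          gcongr _ * ?_ * ?_
          · linarith
          · exact zpow_le_zpow_right_of_le_one₀ hw0 hw1 (by omega)
  have h₂ : ‖w‖ ^ (-N) * (‖u N‖ * ‖v m‖) ≤ D ^ 2 * (1 + |(m : ℝ)|) * ‖w‖ ^ (-m) :=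
    calc ‖w‖ ^ (-N) * (‖u N‖ * ‖v m‖)
        ≤ ‖w‖ ^ (-N) * (D * ‖w‖ ^ N * (D * (1 + |(m : ℝ)|) * ‖w‖ ^ (-m))) := by
          gcongr
          exacts [hu N hN, hv m (hN.trans hNm)]
      _ = D ^ 2 * (1 + |(m : ℝ)|) * ‖w‖ ^ (-m) := by
          rw [show ‖w‖ ^ (-N) = (‖w‖ ^ N)⁻¹ from zpow_neg _ _]
          field_simp
  calc ‖w ^ (-N) * (v N * u m - u N * v m)‖
      ≤ ‖w‖ ^ (-N) * (‖v N‖ * ‖u m‖) + ‖w‖ ^ (-N) * (‖u N‖ * ‖v m‖) := by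
        rw [norm_mul, norm_zpow, ← mul_add, ← norm_mul, ← norm_mul]
        gcongr
        exact norm_sub_le _ _
    _ ≤ 2 * D ^ 2 * (1 + |(m : ℝ)|) * ‖w‖ ^ (-m) := by linarith

lemma summable_mul_of_zpow_bounds (hw0 : 0 < ‖w‖) {x f : ℤ → ℂ}
    (hx : ∀ m, 0 ≤ m → ‖x m‖ ≤ D * (1 + |(m : ℝ)|) * ‖w‖ ^ (-m)) {ρ : ℤ → ℝ}
    (hρ : Summable fun m : ℤ => (1 + |(m : ℝ)|) * ρ m) {M : ℝ}
    (hf : ∀ m, ‖f m‖ ≤ M * ρ m * ‖w‖ ^ (m - 1)) {n : ℤ} (hn : 0 ≤ n) :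
    Summable fun k : ℕ => (x * f) (n + k) := by
  refine .of_norm_bounded ((hρ.comp_injective
    ((add_right_injective n).comp Nat.cast_injective)).mul_left (D / ‖w‖ * M)) fun k => ?_
  refine (norm_mul_le_of_zpow_bounds hw0 (hx _ (by omega)) (hf _)).trans_eq ?_
  simp only [Function.comp_apply]
  ring

lemma norm_zpow_mul_volterra_le (hw0 : 0 < ‖w‖) (hw1 : ‖w‖ ≤ 1)
    (hu : ∀ n, 0 ≤ n → ‖u n‖ ≤ D * ‖w‖ ^ n)
    (hv : ∀ n, 0 ≤ n → ‖v n‖ ≤ D * (1 + |(n : ℝ)|) * ‖w‖ ^ (-n)) (aq : ℤ → ℝ) {ρ : ℤ → ℝ}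
    (hρ : Summable fun m : ℤ => (1 + |(m : ℝ)|) * ρ m) {M : ℝ} {f : ℤ → ℂ}
    (hf : ∀ m, ‖f m‖ ≤ M * ρ m * ‖w‖ ^ (m - 1)) {N : ℤ} (hN : 0 ≤ N) :
    ‖w ^ (-N) * volterra aq u v f N‖
      ≤ 2 * D ^ 2 / (‖w‖ * ‖wronskian aq u v 0‖) * M
        * tailSum (fun m : ℤ => (1 + |(m : ℝ)|) * ρ m) N := by
  have hsu := summable_mul_of_zpow_bounds hw0 (norm_le_one_add_abs_mul_zpow_neg hw0 hw1 hu) hρ hf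
    (by omega : 0 ≤ N + 1)
  have hsv := summable_mul_of_zpow_bounds hw0 hv hρ hf (by omega : 0 ≤ N + 1)
  have hsum : HasSum (fun k : ℕ => 2 * D ^ 2 / ‖w‖ * M * ((1 + |((N + 1 + k : ℤ) : ℝ)|)
      * ρ (N + 1 + k))) (2 * D ^ 2 / ‖w‖ * M * tailSum (fun m : ℤ => (1 + |(m : ℝ)|) * ρ m) N) :=
    ((hρ.comp_injective ((add_right_injective (N + 1)).comp Nat.cast_injective)).hasSum).mul_left _
  have hrepr : w ^ (-N) * volterra aq u v f N = (∑' k : ℕ, w ^ (-N)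
      * (v N * u (N + 1 + k) - u N * v (N + 1 + k)) * f (N + 1 + k)) / wronskian aq u v 0 := by
    rw [volterra, tailSum, tailSum, mul_div_assoc', ← tsum_mul_left, ← tsum_mul_left,
      ← (hsu.mul_left _).tsum_sub (hsv.mul_left _), ← tsum_mul_left]
    congr 2 with k
    simp only [Pi.mul_apply]
    ring
  have hterm (k : ℕ) : ‖w ^ (-N) * (v N * u (N + 1 + k) - u N * v (N + 1 + k)) * f (N + 1 + k)‖
      ≤ 2 * D ^ 2 / ‖w‖ * M * ((1 + |((N + 1 + k : ℤ) : ℝ)|) * ρ (N + 1 + k)) := by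
    refine (norm_mul_le_of_zpow_bounds hw0 (norm_kernel_le hw0 hw1 hu hv hN (by omega))
      (hf _)).trans_eq ?_
    ring
  calc ‖w ^ (-N) * volterra aq u v f N‖
      ≤ (2 * D ^ 2 / ‖w‖ * M * tailSum (fun m : ℤ => (1 + |(m : ℝ)|) * ρ m) N)
        / ‖wronskian aq u v 0‖ := by
        rw [hrepr, norm_div]
        exact div_le_div_of_nonneg_right (tsum_of_norm_bounded hsum hterm) (norm_nonneg _)
    _ = _ := by ring

end Estimates

def jacobiDiff (a aq b bq : ℤ → ℝ) (ψ : ℤ → ℂ) (n : ℤ) : ℂ :=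
  jacobi a b ψ n - jacobi aq bq ψ n

lemma norm_jacobiDiff_le {a aq b bq : ℤ → ℝ} {w : ℂ} (hw0 : 0 < ‖w‖) (hw1 : ‖w‖ ≤ 1)
    {φ : ℤ → ℂ} {M : ℝ} (hφ : ∀ j, ‖φ j‖ ≤ M) (m : ℤ) :
    ‖jacobiDiff a aq b bq (fun j => w ^ j * φ j) m‖
      ≤ M * jacobiRowDist a aq b bq m * ‖w‖ ^ (m - 1) := by
  have hψ (j : ℤ) (hj : m - 1 ≤ j) : ‖w ^ j * φ j‖ ≤ M * ‖w‖ ^ (m - 1) := by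
    rw [norm_mul, norm_zpow, mul_comm]
    exact mul_le_mul (hφ j) (zpow_le_zpow_right_of_le_one₀ hw0 hw1 hj) (by positivity)
      ((norm_nonneg _).trans (hφ j))
  have hterm (c : ℝ) (j : ℤ) (hj : m - 1 ≤ j) :
      ‖(c : ℂ) * (w ^ j * φ j)‖ ≤ |c| * (M * ‖w‖ ^ (m - 1)) := by
    rw [norm_mul, Complex.norm_real, Real.norm_eq_abs]
    exact mul_le_mul_of_nonneg_left (hψ j hj) (abs_nonneg c)
  have hdiff : jacobiDiff a aq b bq (fun j => w ^ j * φ j) m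
      = ((a m - aq m : ℝ) : ℂ) * (w ^ (m + 1) * φ (m + 1))
        + ((a (m - 1) - aq (m - 1) : ℝ) : ℂ) * (w ^ (m - 1) * φ (m - 1))
        + ((b m - bq m : ℝ) : ℂ) * (w ^ m * φ m) := by
    simp only [jacobiDiff, jacobi]
    push_cast
    ring
  rw [hdiff]
  refine (norm_add₃_le ..).trans ?_
  have := hterm (a m - aq m) (m + 1) (by omega)
  have := hterm (a (m - 1) - aq (m - 1)) (m - 1) le_rfl
  have := hterm (b m - bq m) m (by omega)
  simp only [jacobiRowDist]
  linarith

section FixedPoint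

variable {a aq b bq : ℤ → ℝ} {w : ℂ} {u v : ℤ → ℂ} {D : ℝ}

lemma norm_zpow_neg_mul_le (hw0 : 0 < ‖w‖) (hu : ∀ n, 0 ≤ n → ‖u n‖ ≤ D * ‖w‖ ^ n) {n : ℤ}
    (hn : 0 ≤ n) : ‖w ^ (-n) * u n‖ ≤ D := by
  rw [norm_mul, norm_zpow, zpow_neg, inv_mul_le_iff₀ (zpow_pos hw0 n), mul_comm]
  exact hu n hn

lemma volterra_jacobiDiff_sub (hw0 : 0 < ‖w‖) (hw1 : ‖w‖ ≤ 1)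
    (hu : ∀ n, 0 ≤ n → ‖u n‖ ≤ D * ‖w‖ ^ n)
    (hv : ∀ n, 0 ≤ n → ‖v n‖ ≤ D * (1 + |(n : ℝ)|) * ‖w‖ ^ (-n))
    (hρ : Summable fun m : ℤ => (1 + |(m : ℝ)|) * jacobiRowDist a aq b bq m)
    {φ χ : ℤ → ℂ} {M M' : ℝ} (hφ : ∀ j, ‖φ j‖ ≤ M) (hχ : ∀ j, ‖χ j‖ ≤ M') {N : ℤ} (hN : 0 ≤ N) :
    volterra aq u v (jacobiDiff a aq b bq fun j => w ^ j * φ j) N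
      - volterra aq u v (jacobiDiff a aq b bq fun j => w ^ j * χ j) N
      = volterra aq u v (jacobiDiff a aq b bq fun j => w ^ j * (φ - χ) j) N := by
  have hu' := norm_le_one_add_abs_mul_zpow_neg hw0 hw1 hu
  have hs {x : ℤ → ℂ} (hx : ∀ m, 0 ≤ m → ‖x m‖ ≤ D * (1 + |(m : ℝ)|) * ‖w‖ ^ (-m))
      {ψ : ℤ → ℂ} {K : ℝ} (hψ : ∀ j, ‖ψ j‖ ≤ K) := summable_mul_of_zpow_bounds hw0 hx hρ
    (norm_jacobiDiff_le hw0 hw1 hψ) (by omega : 0 ≤ N + 1)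
  rw [volterra_sub (hs hu' hφ) (hs hu' hχ) (hs hv hφ) (hs hv hχ)]
  refine congrArg (volterra aq u v · N) (funext fun m => ?_)
  simp only [jacobiDiff, jacobi, Pi.sub_apply]
  ring

lemma exists_fixedPoint_volterra (hw0 : 0 < ‖w‖) (hw1 : ‖w‖ ≤ 1)
    (hu : ∀ n, 0 ≤ n → ‖u n‖ ≤ D * ‖w‖ ^ n)
    (hv : ∀ n, 0 ≤ n → ‖v n‖ ≤ D * (1 + |(n : ℝ)|) * ‖w‖ ^ (-n))
    (hρ : Summable fun m : ℤ => (1 + |(m : ℝ)|) * jacobiRowDist a aq b bq m) {n₀ : ℤ}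
    (hn₀ : 0 ≤ n₀) (hsmall : ∀ N, n₀ ≤ N → 2 * D ^ 2 / (‖w‖ * ‖wronskian aq u v 0‖)
      * tailSum (fun m : ℤ => (1 + |(m : ℝ)|) * jacobiRowDist a aq b bq m) N ≤ 1 / 2) :
    ∃ φ : ℤ →ᵇ ℂ, ∀ n, n₀ ≤ n →
      w ^ n * φ n = u n + volterra aq u v (jacobiDiff a aq b bq fun j => w ^ j * φ j) n := by
  set V : (ℤ → ℂ) → ℤ → ℂ := fun φ => volterra aq u v (jacobiDiff a aq b bq fun j => w ^ j * φ j)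
  have hV {φ : ℤ → ℂ} {M : ℝ} (hφ : ∀ j, ‖φ j‖ ≤ M) {N : ℤ} (hN : n₀ ≤ N) :
      ‖w ^ (-N) * V φ N‖ ≤ M / 2 := by
    have hM : 0 ≤ M := (norm_nonneg _).trans (hφ 0)
    refine (norm_zpow_mul_volterra_le hw0 hw1 hu hv aq hρ (norm_jacobiDiff_le hw0 hw1 hφ)
      (hn₀.trans hN)).trans ?_
    nlinarith [hsmall N hN]
  -- Freezing the index at `max n n₀` keeps the map on bounded sequences on all of `ℤ`
  -- while only the part `m > n₀` of the perturbation enters.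
  let T (φ : ℤ →ᵇ ℂ) : ℤ →ᵇ ℂ := ofNormedAddCommGroupDiscrete
    (fun n => w ^ (-max n n₀) * (u (max n n₀) + V φ (max n n₀))) (D + ‖φ‖ / 2) fun n => by
      rw [mul_add]
      exact (norm_add_le _ _).trans (add_le_add
        (norm_zpow_neg_mul_le hw0 hu (hn₀.trans (le_max_right _ _)))
        (hV (norm_coe_le_norm φ) (le_max_right _ _)))
  have hT : ContractingWith (1 / 2) T := by
    refine ⟨by rw [← NNReal.coe_lt_coe]; norm_num, .of_dist_le_mul fun φ χ => ?_⟩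
    rw [dist_le (by positivity)]
    intro n
    have hφχ (j : ℤ) : ‖(⇑φ - ⇑χ) j‖ ≤ dist φ χ := by
      rw [Pi.sub_apply, ← dist_eq_norm]
      exact dist_coe_le_dist j
    calc dist (T φ n) (T χ n)
        = ‖w ^ (-max n n₀) * (V φ (max n n₀) - V χ (max n n₀))‖ := by
          rw [dist_eq_norm, mul_sub]
          simp only [T, coe_ofNormedAddCommGroupDiscrete]
          ring_nf
      _ ≤ dist φ χ / 2 := by
          rw [volterra_jacobiDiff_sub hw0 hw1 hu hv hρ (norm_coe_le_norm φ) (norm_coe_le_norm χ)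
            (hn₀.trans (le_max_right _ _))]
          exact hV hφχ (le_max_right _ _)
      _ = ↑(1 / 2 : NNReal) * dist φ χ := by push_cast; ring
  set φ := ContractingWith.fixedPoint T hT
  refine ⟨φ, fun n hn => ?_⟩
  have hφ : φ n = T φ n := congrFun (congrArg _ (hT.fixedPoint_isFixedPt).symm) n
  simp only [hφ, T, coe_ofNormedAddCommGroupDiscrete, max_eq_left hn, V]
  rw [← mul_assoc, ← zpow_add₀ (norm_pos_iff.1 hw0), add_neg_cancel, zpow_zero, one_mul]

end FixedPoint

section Jost

variable {a aq b bq : ℤ → ℝ} {z w : ℂ} {u v : ℤ → ℂ} {D : ℝ}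

theorem exists_solution_tendsto_atTop (ha : ∀ n, a n ≠ 0)
    (hρ : Summable fun m : ℤ => (1 + |(m : ℝ)|) * jacobiRowDist a aq b bq m)
    (hw0 : 0 < ‖w‖) (hw1 : ‖w‖ ≤ 1) (hu_sol : ∀ n, jacobi aq bq u n = z * u n)
    (hv_sol : ∀ n, jacobi aq bq v n = z * v n) (hW : wronskian aq u v 0 ≠ 0)
    (hu : ∀ n, 0 ≤ n → ‖u n‖ ≤ D * ‖w‖ ^ n)
    (hv : ∀ n, 0 ≤ n → ‖v n‖ ≤ D * (1 + |(n : ℝ)|) * ‖w‖ ^ (-n)) :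
    ∃ ψ : ℤ → ℂ, (∀ n, jacobi a b ψ n = z * ψ n) ∧
      Tendsto (fun n => ‖w ^ (-n) * (ψ n - u n)‖) atTop (𝓝 0) := by
  set E := 2 * D ^ 2 / (‖w‖ * ‖wronskian aq u v 0‖)
  set weight := fun m : ℤ => (1 + |(m : ℝ)|) * jacobiRowDist a aq b bq m
  obtain ⟨n₁, hn₁⟩ := eventually_atTop.1 <|
    ((tendsto_tailSum _).const_mul E).eventually (ge_mem_nhds (by norm_num : E * 0 < 1 / 2))
  set n₀ := max n₁ 0
  obtain ⟨φ, hφ⟩ := exists_fixedPoint_volterra hw0 hw1 hu hv hρ (le_max_right n₁ 0)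
    fun N hN => hn₁ N ((le_max_left _ _).trans hN)
  set f := jacobiDiff a aq b bq fun j => w ^ j * φ j
  have hf := norm_jacobiDiff_le (a := a) (aq := aq) (b := b) (bq := bq) hw0 hw1
    (norm_coe_le_norm φ)
  set Ψ := u + volterra aq u v f
  have hΨ (n : ℤ) (hn : n₀ ≤ n) : Ψ n = w ^ n * φ n := (hφ n hn).symm
  have hΨ_sol (n : ℤ) (hn : n₀ < n) : jacobi a b Ψ n = z * Ψ n := by
    have hf_n : f n = jacobi a b Ψ n - jacobi aq bq Ψ n := by
      simp only [f, jacobiDiff]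
      congr 1 <;> exact jacobi_congr fun j hj _ => (hΨ j (by omega)).symm
    have hV := jacobi_volterra hu_sol hv_sol hW
      (summable_mul_of_zpow_bounds hw0 (norm_le_one_add_abs_mul_zpow_neg hw0 hw1 hu) hρ hf
        (by omega : 0 ≤ n))
      (summable_mul_of_zpow_bounds hw0 hv hρ hf (by omega : 0 ≤ n))
    have hq : jacobi aq bq Ψ n = z * Ψ n - f n := by
      rw [jacobi_add, hu_sol, hV]
      simp only [Ψ, f, Pi.add_apply]
      ring
    linear_combination hq - hf_n
  obtain ⟨ψ, hψ_sol, hψ⟩ := exists_solution_extending ha hΨ_sol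
  refine ⟨ψ, hψ_sol, squeeze_zero' (.of_forall fun n => norm_nonneg _) ?_
    (by simpa using (tendsto_tailSum weight).const_mul (E * ‖φ‖))⟩
  filter_upwards [eventually_ge_atTop n₀] with n hn
  rw [hψ n hn]
  simp only [Ψ, Pi.add_apply, add_sub_cancel_left]
  exact norm_zpow_mul_volterra_le hw0 hw1 hu hv aq hρ hf (le_max_right _ _ |>.trans hn)

theorem exists_solution_tendsto_atBot (ha : ∀ n, a n ≠ 0)
    (hρ : Summable fun m : ℤ => (1 + |(m : ℝ)|) * jacobiRowDist a aq b bq m)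
    (hw0 : 0 < ‖w‖) (hw1 : ‖w‖ ≤ 1) (hu_sol : ∀ n, jacobi aq bq u n = z * u n)
    (hv_sol : ∀ n, jacobi aq bq v n = z * v n) (hW : wronskian aq u v 0 ≠ 0)
    (hu : ∀ n, n ≤ 0 → ‖u n‖ ≤ D * ‖w‖ ^ (-n))
    (hv : ∀ n, n ≤ 0 → ‖v n‖ ≤ D * (1 + |(n : ℝ)|) * ‖w‖ ^ n) :
    ∃ ψ : ℤ → ℂ, (∀ n, jacobi a b ψ n = z * ψ n) ∧
      Tendsto (fun n => ‖w ^ n * (ψ n - u n)‖) atBot (𝓝 0) := by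
  have hρ' : Summable fun m : ℤ => (1 + |(m : ℝ)|)
      * jacobiRowDist (reflect a) (reflect aq) (b ∘ Neg.neg) (bq ∘ Neg.neg) m := by
    refine (hρ.comp_injective neg_injective).congr fun m => ?_
    simp [jacobiRowDist_reflect]
  have hsol {x : ℤ → ℂ} (hx : ∀ n, jacobi aq bq x n = z * x n) (n : ℤ) :
      jacobi (reflect aq) (bq ∘ Neg.neg) (x ∘ Neg.neg) n = z * (x ∘ Neg.neg) n := by
    rw [jacobi_comp_neg, hx]
    rfl
  obtain ⟨ψ, hψ_sol, hψ⟩ := exists_solution_tendsto_atTop (a := reflect a) (fun n => ha _) hρ'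
    hw0 hw1 (hsol hu_sol) (hsol hv_sol)
    (by rwa [wronskian_comp_neg, neg_zero, zero_sub, wronskian_eq_wronskian_zero hu_sol hv_sol,
      neg_ne_zero])
    (fun n hn => by simpa using hu (-n) (by omega))
    (fun n hn => by simpa using hv (-n) (by omega))
  refine ⟨ψ ∘ Neg.neg, fun n => ?_,
    by simpa [Function.comp_def] using hψ.comp tendsto_neg_atBot_atTop⟩
  have h := jacobi_comp_neg a b (ψ ∘ Neg.neg) (-n)
  rw [neg_neg, show (ψ ∘ Neg.neg) ∘ Neg.neg = ψ from funext fun k => congrArg ψ (neg_neg k)] at h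
  rw [← h, hψ_sol]
  simp

end Jost

lemma summable_jacobiRowDist {a aq b bq : ℤ → ℝ}
    (h : Summable fun n : ℤ => (1 + |(n : ℝ)|) * (|a n - aq n| + |b n - bq n|)) :
    Summable fun n : ℤ => (1 + |(n : ℝ)|) * jacobiRowDist a aq b bq n := by
  refine .of_nonneg_of_le (fun n => by unfold jacobiRowDist; positivity) (fun n => ?_)
    (h.add ((h.comp_injective (sub_left_injective (b := 1))).mul_left 2))
  have hn : 1 + |(n : ℝ)| ≤ 2 * (1 + |((n - 1 : ℤ) : ℝ)|) := by
    push_cast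
    linarith [abs_sub_abs_le_abs_sub (n : ℝ) (n - 1), abs_nonneg ((n : ℝ) - 1),
      show |(n : ℝ) - (n - 1)| = 1 by norm_num]
  simp only [jacobiRowDist, Function.comp_apply]
  nlinarith [mul_le_mul_of_nonneg_right hn (abs_nonneg (a (n - 1) - aq (n - 1))),
    mul_nonneg (by positivity : (0 : ℝ) ≤ 1 + |((n - 1 : ℤ) : ℝ)|)
      (abs_nonneg (b (n - 1) - bq (n - 1)))]

lemma norm_le_of_eq_mul_zpow {w : ℂ} {ψ θ : ℤ → ℂ} {e : ℤ → ℤ} (h : ∀ n, ψ n = θ n * w ^ e n)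
    {C : ℝ} (hθ : ∀ n, ‖θ n‖ ≤ C) (n : ℤ) : ‖ψ n‖ ≤ C * ‖w‖ ^ e n := by
  rw [h, norm_mul, norm_zpow]
  exact mul_le_mul_of_nonneg_right (hθ n) (by positivity)

lemma le_mul_one_add_abs_mul {x C y : ℝ} (hC : 0 ≤ C) (hy : 0 ≤ y) (h : x ≤ C * y) (t : ℝ) :
    x ≤ C * (1 + |t|) * y :=
  h.trans (by nlinarith [mul_nonneg hC hy, mul_nonneg (mul_nonneg hC hy) (abs_nonneg t)])

end JacobiOperator

open JacobiOperator

theorem stmt_6_general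
    (a aq : ℤ → ℝ) (b bq : ℤ → ℝ)
    (ha : ∀ n, 0 < a n)
    (hshort : Summable (fun n : ℤ => (1 + |(n : ℝ)|) * (|a n - aq n| + |b n - bq n|)))
    (z w : ℂ) (hw0 : 0 < ‖w‖) (hw1 : ‖w‖ ≤ 1)
    (ψqp ψqm : ℤ → ℂ)
    (hψqp : ∀ n : ℤ, (aq n : ℂ) * ψqp (n+1) + (aq (n-1) : ℂ) * ψqp (n-1) + (bq n : ℂ) * ψqp n
      = z * ψqp n)
    (hψqm : ∀ n : ℤ, (aq n : ℂ) * ψqm (n+1) + (aq (n-1) : ℂ) * ψqm (n-1) + (bq n : ℂ) * ψqm n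
      = z * ψqm n)
    (hcase :
      -- case (i)
      (∃ θp θm : ℤ → ℂ,
        (∀ n : ℤ, ψqp n = θp n * w ^ n) ∧
        (∀ n : ℤ, ψqm n = θm n * w ^ (-n)) ∧
        (∃ c C : ℝ, 0 < c ∧ ∀ n : ℤ,
          c ≤ ‖θp n‖ ∧ ‖θp n‖ ≤ C ∧
          c ≤ ‖θm n‖ ∧ ‖θm n‖ ≤ C) ∧
        (aq 0 : ℂ) * (ψqm 0 * ψqp 1 - ψqm 1 * ψqp 0) ≠ 0) ∨
      -- case (ii)
      (‖w‖ = 1 ∧ ψqp = ψqm ∧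
        (∃ θ : ℤ → ℂ,
          (∀ n : ℤ, ψqp n = θ n * w ^ n) ∧
          (∃ c C : ℝ, 0 < c ∧ ∀ n : ℤ,
            c ≤ ‖θ n‖ ∧ ‖θ n‖ ≤ C)) ∧
        (∃ φhat θhat : ℤ → ℂ,
          (∀ n : ℤ, (aq n : ℂ) * φhat (n+1) + (aq (n-1) : ℂ) * φhat (n-1)
            + (bq n : ℂ) * φhat n = z * φhat n) ∧
          (∀ n : ℤ, φhat n = ψqp n * (θhat n + (n : ℂ))) ∧
          (∃ C : ℝ, ∀ n : ℤ, ‖θhat n‖ ≤ C) ∧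
          (aq 0 : ℂ) * (ψqp 0 * φhat 1 - ψqp 1 * φhat 0) ≠ 0))) :
    ∃ ψp ψm : ℤ → ℂ,
      (∀ n : ℤ, (a n : ℂ) * ψp (n+1) + (a (n-1) : ℂ) * ψp (n-1) + (b n : ℂ) * ψp n
        = z * ψp n) ∧
      (∀ n : ℤ, (a n : ℂ) * ψm (n+1) + (a (n-1) : ℂ) * ψm (n-1) + (b n : ℂ) * ψm n
        = z * ψm n) ∧
      Tendsto (fun n : ℤ => ‖w ^ (-n) * (ψp n - ψqp n)‖) atTop (nhds 0) ∧
      Tendsto (fun n : ℤ => ‖w ^ n * (ψm n - ψqm n)‖) atBot (nhds 0) := by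
  have ha' (n : ℤ) : a n ≠ 0 := (ha n).ne'
  have hρ := summable_jacobiRowDist hshort
  rcases hcase with ⟨θp, θm, hθp, hθm, ⟨_, C, -, hθ⟩, hW⟩ |
    ⟨hw, rfl, ⟨θ, hθ_eq, _, C, -, hθ⟩, φh, θh, hφh, hφh_eq, ⟨Ch, hCh⟩, hW⟩
  · have hC : 0 ≤ C := (norm_nonneg _).trans (hθ 0).2.1
    have hp := norm_le_of_eq_mul_zpow hθp fun n => (hθ n).2.1
    have hm := norm_le_of_eq_mul_zpow hθm fun n => (hθ n).2.2.2
    have hr (n : ℤ) : 0 ≤ ‖w‖ ^ n := (zpow_pos hw0 n).le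
    obtain ⟨ψp, hψp, hψp_lim⟩ := exists_solution_tendsto_atTop ha' hρ hw0 hw1 hψqp hψqm
      (by rwa [wronskian_swap, neg_ne_zero]) (fun n _ => hp n)
      (fun n _ => le_mul_one_add_abs_mul hC (hr _) (hm n) _)
    obtain ⟨ψm, hψm, hψm_lim⟩ := exists_solution_tendsto_atBot ha' hρ hw0 hw1 hψqm hψqp hW
      (fun n _ => hm n) (fun n _ => le_mul_one_add_abs_mul hC (hr _) (hp n) _)
    exact ⟨ψp, ψm, hψp, hψm, hψp_lim, hψm_lim⟩
  · have hC : 0 ≤ C := (norm_nonneg _).trans (hθ 0).2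
    have hCh0 : 0 ≤ Ch := (norm_nonneg _).trans (hCh 0)
    have hpow (k : ℤ) : ‖w‖ ^ k = 1 := by rw [hw, one_zpow]
    have hp (n : ℤ) : ‖ψqp n‖ ≤ C := by
      simpa [hpow] using norm_le_of_eq_mul_zpow hθ_eq (fun n => (hθ n).2) n
    have hp_bd (n k : ℤ) : ‖ψqp n‖ ≤ C * (Ch + 1) * ‖w‖ ^ k := by
      rw [hpow, mul_one]
      nlinarith [hp n, mul_nonneg hC hCh0]
    have hφh_bd (n k : ℤ) : ‖φh n‖ ≤ C * (Ch + 1) * (1 + |(n : ℝ)|) * ‖w‖ ^ k := by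
      rw [hpow, mul_one, hφh_eq, norm_mul, mul_assoc]
      refine mul_le_mul (hp n) ((norm_add_le _ _).trans ?_) (norm_nonneg _) hC
      rw [Complex.norm_intCast]
      nlinarith [hCh n, abs_nonneg (n : ℝ), mul_nonneg hCh0 (abs_nonneg (n : ℝ))]
    obtain ⟨ψp, hψp, hψp_lim⟩ := exists_solution_tendsto_atTop ha' hρ hw0 hw1 hψqp hφh hW
      (fun n _ => hp_bd n _) (fun n _ => hφh_bd n _)
    obtain ⟨ψm, hψm, hψm_lim⟩ := exists_solution_tendsto_atBot ha' hρ hw0 hw1 hψqp hφh hW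
      (fun n _ => hp_bd n _) (fun n _ => hφh_bd n _)
    exact ⟨ψp, ψm, hψp, hψm, hψp_lim, hψm_lim⟩

theorem stmt_6
    (a aq : ℤ → ℝ) (b bq : ℤ → ℝ)
    (ha : ∀ n, 0 < a n) (haq : ∀ n, 0 < aq n)
    (hbd : ∃ A : ℝ, ∀ n, a n ≤ A ∧ aq n ≤ A ∧ |b n| ≤ A ∧ |bq n| ≤ A)
    (hinf : ∃ ε : ℝ, 0 < ε ∧ ∀ n, ε ≤ a n ∧ ε ≤ aq n)
    (hshort : Summable (fun n : ℤ => (1 + |(n : ℝ)|) * (|a n - aq n| + |b n - bq n|)))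
    (z w : ℂ) (hw0 : 0 < ‖w‖) (hw1 : ‖w‖ ≤ 1)
    (ψqp ψqm : ℤ → ℂ)
    (hψqp : ∀ n : ℤ, (aq n : ℂ) * ψqp (n+1) + (aq (n-1) : ℂ) * ψqp (n-1) + (bq n : ℂ) * ψqp n
      = z * ψqp n)
    (hψqm : ∀ n : ℤ, (aq n : ℂ) * ψqm (n+1) + (aq (n-1) : ℂ) * ψqm (n-1) + (bq n : ℂ) * ψqm n
      = z * ψqm n)
    (hcase :
      -- case (i)
      (∃ θp θm : ℤ → ℂ,
        (∀ n : ℤ, ψqp n = θp n * w ^ n) ∧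
        (∀ n : ℤ, ψqm n = θm n * w ^ (-n)) ∧
        (∃ c C : ℝ, 0 < c ∧ ∀ n : ℤ,
          c ≤ ‖θp n‖ ∧ ‖θp n‖ ≤ C ∧
          c ≤ ‖θm n‖ ∧ ‖θm n‖ ≤ C) ∧
        (aq 0 : ℂ) * (ψqm 0 * ψqp 1 - ψqm 1 * ψqp 0) ≠ 0) ∨
      -- case (ii)
      (‖w‖ = 1 ∧ ψqp = ψqm ∧
        (∃ θ : ℤ → ℂ,
          (∀ n : ℤ, ψqp n = θ n * w ^ n) ∧
          (∃ c C : ℝ, 0 < c ∧ ∀ n : ℤ,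
            c ≤ ‖θ n‖ ∧ ‖θ n‖ ≤ C)) ∧
        (∃ φhat θhat : ℤ → ℂ,
          (∀ n : ℤ, (aq n : ℂ) * φhat (n+1) + (aq (n-1) : ℂ) * φhat (n-1)
            + (bq n : ℂ) * φhat n = z * φhat n) ∧
          (∀ n : ℤ, φhat n = ψqp n * (θhat n + (n : ℂ))) ∧
          (∃ C : ℝ, ∀ n : ℤ, ‖θhat n‖ ≤ C) ∧
          (aq 0 : ℂ) * (ψqp 0 * φhat 1 - ψqp 1 * φhat 0) ≠ 0))) :
    ∃ ψp ψm : ℤ → ℂ,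
      (∀ n : ℤ, (a n : ℂ) * ψp (n+1) + (a (n-1) : ℂ) * ψp (n-1) + (b n : ℂ) * ψp n
        = z * ψp n) ∧
      (∀ n : ℤ, (a n : ℂ) * ψm (n+1) + (a (n-1) : ℂ) * ψm (n-1) + (b n : ℂ) * ψm n
        = z * ψm n) ∧
      Tendsto (fun n : ℤ => ‖w ^ (-n) * (ψp n - ψqp n)‖) atTop (nhds 0) ∧
      Tendsto (fun n : ℤ => ‖w ^ n * (ψm n - ψqm n)‖) atBot (nhds 0) :=
  stmt_6_general a aq b bq ha hshort z w hw0 hw1 ψqp ψqm hψqp hψqm hcase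
end

section
/- Let a, a_q : ℤ → (0,∞) and b, b_q : ℤ → ℝ, and let K : ℤ² → ℂ satisfy K(n,m) = 0 for m < n, K(n,n) ≠ 0 for all n, and the intertwining identity a(n-1)K(n-1,m) + b(n)K(n,m) + a(n)K(n+1,m) = a_q(m-1)K(n,m-1) + b_q(m)K(n,m) + a_q(m)K(n,m+1) for all n, m ∈ ℤ. Then for every n ∈ ℤ: a(n)/a_q(n) = K(n+1,n+1)/K(n,n), and b(n) - b_q(n) = a_q(n) K(n,n+1)/K(n,n) - a_q(n-1) K(n-1,n)/K(n-1,n-1). -/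
/-!
Evaluating the intertwining identity on and just below the diagonal, lower triangularity of `K`
kills every term but those adjacent to the diagonal. At `(k + 1, k)` it leaves
`a k K(k,k) = a_q k K(k+1,k+1)`, and at `(n, n)` it leaves
`(b n - b_q n) K(n,n) = a_q n K(n,n+1) - a(n-1) K(n-1,n)`; dividing by the diagonal entries,
and using the first identity at `n - 1` to rewrite `a(n-1)`, gives both formulas.
-/

namespace JacobiKernel

def Intertwines {R : Type*} [CommRing R] (a b aq bq : ℤ → R) (K : ℤ → ℤ → R) : Prop :=
  ∀ n m : ℤ, a (n - 1) * K (n - 1) m + b n * K n m + a n * K (n + 1) m =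
    aq (m - 1) * K n (m - 1) + bq m * K n m + aq m * K n (m + 1)

section CommRing

variable {R : Type*} [CommRing R] {a b aq bq : ℤ → R} {K : ℤ → ℤ → R}

theorem Intertwines.mul_diag_eq (hint : Intertwines a b aq bq K)
    (hK0 : ∀ n m : ℤ, m < n → K n m = 0) (k : ℤ) :
    a k * K k k = aq k * K (k + 1) (k + 1) := by
  have h := hint (k + 1) k
  rw [hK0 (k + 1) k (by omega), hK0 (k + 1 + 1) k (by omega),
    hK0 (k + 1) (k - 1) (by omega), add_sub_cancel_right] at h
  linear_combination h

theorem Intertwines.sub_mul_diag_eq (hint : Intertwines a b aq bq K)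
    (hK0 : ∀ n m : ℤ, m < n → K n m = 0) (n : ℤ) :
    (b n - bq n) * K n n = aq n * K n (n + 1) - a (n - 1) * K (n - 1) n := by
  have h := hint n n
  rw [hK0 (n + 1) n (by omega), hK0 n (n - 1) (by omega)] at h
  linear_combination h

end CommRing

section Field

variable {F : Type*} [Field F] {a b aq bq : ℤ → F} {K : ℤ → ℤ → F}

theorem Intertwines.div_eq_div_diag (hint : Intertwines a b aq bq K)
    (hK0 : ∀ n m : ℤ, m < n → K n m = 0) (hKne : ∀ n : ℤ, K n n ≠ 0) {n : ℤ}
    (haq : aq n ≠ 0) :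
    a n / aq n = K (n + 1) (n + 1) / K n n := by
  rw [div_eq_div_iff haq (hKne n)]
  linear_combination hint.mul_diag_eq hK0 n

theorem Intertwines.sub_eq_sub_div_diag (hint : Intertwines a b aq bq K)
    (hK0 : ∀ n m : ℤ, m < n → K n m = 0) (hKne : ∀ n : ℤ, K n n ≠ 0) (n : ℤ) :
    b n - bq n = aq n * K n (n + 1) / K n n - aq (n - 1) * K (n - 1) n / K (n - 1) (n - 1) := by
  have hprev := hint.mul_diag_eq hK0 (n - 1)
  rw [sub_add_cancel] at hprev
  rw [div_sub_div _ _ (hKne n) (hKne (n - 1)), eq_div_iff (mul_ne_zero (hKne n) (hKne (n - 1)))]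
  linear_combination K (n - 1) (n - 1) * hint.sub_mul_diag_eq hK0 n - K (n - 1) n * hprev

end Field

end JacobiKernel

open JacobiKernel in
theorem stmt_9_general
    (a aq : ℤ → ℝ) (b bq : ℤ → ℝ)
    (haq : ∀ n, 0 < aq n)
    (K : ℤ → ℤ → ℂ)
    (hK0 : ∀ n m : ℤ, m < n → K n m = 0)
    (hKne : ∀ n : ℤ, K n n ≠ 0)
    (hint : ∀ n m : ℤ,
      (a (n-1) : ℂ) * K (n-1) m + (b n : ℂ) * K n m + (a n : ℂ) * K (n+1) m =
      (aq (m-1) : ℂ) * K n (m-1) + (bq m : ℂ) * K n m + (aq m : ℂ) * K n (m+1)) :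
    ∀ n : ℤ,
      ((a n : ℂ) / (aq n : ℂ) = K (n+1) (n+1) / K n n) ∧
      ((b n : ℂ) - (bq n : ℂ) =
        (aq n : ℂ) * K n (n+1) / K n n - (aq (n-1) : ℂ) * K (n-1) n / K (n-1) (n-1)) := by
  have hK : Intertwines (fun n ↦ (a n : ℂ)) (fun n ↦ (b n : ℂ)) (fun n ↦ (aq n : ℂ))
      (fun n ↦ (bq n : ℂ)) K := hint
  exact fun n ↦ ⟨hK.div_eq_div_diag hK0 hKne (by exact_mod_cast (haq n).ne'),
    hK.sub_eq_sub_div_diag hK0 hKne n⟩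

theorem stmt_9
    (a aq : ℤ → ℝ) (b bq : ℤ → ℝ)
    (ha : ∀ n, 0 < a n) (haq : ∀ n, 0 < aq n)
    (K : ℤ → ℤ → ℂ)
    (hK0 : ∀ n m : ℤ, m < n → K n m = 0)
    (hKne : ∀ n : ℤ, K n n ≠ 0)
    (hint : ∀ n m : ℤ,
      (a (n-1) : ℂ) * K (n-1) m + (b n : ℂ) * K n m + (a n : ℂ) * K (n+1) m =
      (aq (m-1) : ℂ) * K n (m-1) + (bq m : ℂ) * K n m + (aq m : ℂ) * K n (m+1)) :
    ∀ n : ℤ,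
      ((a n : ℂ) / (aq n : ℂ) = K (n+1) (n+1) / K n n) ∧
      ((b n : ℂ) - (bq n : ℂ) =
        (aq n : ℂ) * K n (n+1) / K n n - (aq (n-1) : ℂ) * K (n-1) n / K (n-1) (n-1)) :=
  stmt_9_general a aq b bq haq K hK0 hKne hint
end

section
/- Let c : ℤ → [0,∞) with Σ_{m∈ℤ} (1+|m|) c(m) < ∞ and C(s) = Σ_{j=⌊s/2⌋+1}^{∞} c(j). If F : ℤ² → ℝ satisfies |F(l,m)| ≤ C(l+m) for all l, m ∈ ℤ, then for every n ∈ ℤ the operator on ℓ²(ℕ₀) defined by (ℱ_n f)(j) = Σ_{l=0}^{∞} F(n+l, n+j) f(l) is Hilbert–Schmidt; in particular Σ_{l,j ≥ 0} F(n+l, n+j)² < ∞. -/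
/-!
With `D k = C (2n + k)`, a tail `∑_{m ≥ n + 1 + ⌊k/2⌋} c m`, one has `|F (n+l) (n+j)| ≤ D (l+j)`,
so `∑ F² ≤ ∑_k (k+1) D(k)²`. This converges: `D` is summable, because summing the tails of `c`
produces the weights `1 + |m|`, and `(k+1) D k` is bounded, because `(1+a) ∑_{m ≥ a} c m` is at most
`∑ (1 + |m|) c m`. A square-summable kernel then defines a bounded operator on `ℓ²` whose `j`-th
coordinate is an inner product with the `j`-th row, and it is Hilbert–Schmidt by Cauchy–Schwarz.
-/

open Filter

open scoped ComplexConjugate InnerProductSpace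

theorem summable_comp_add_of_summable_succ_mul {g : ℕ → ℝ} (hg : ∀ k, 0 ≤ g k)
    (h : Summable fun k : ℕ => ((k : ℝ) + 1) * g k) :
    Summable fun p : ℕ × ℕ => g (p.1 + p.2) := by
  rw [← Finset.HasAntidiagonal.sigmaAntidiagonalEquivProd.summable_iff]
  refine (summable_sigma_of_nonneg fun _ => hg _).2 ⟨fun _ => .of_finite, h.congr fun k => ?_⟩
  have hfiber : ∀ x : Finset.HasAntidiagonal.antidiagonal k,
      g ((x : ℕ × ℕ).1 + (x : ℕ × ℕ).2) = g k :=
    fun x => congrArg g (Finset.HasAntidiagonal.mem_antidiagonal.1 x.2)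
  simp [hfiber, Finset.Nat.card_antidiagonal]

section WeightedTails

variable {c : ℤ → ℝ} (hc : ∀ m, 0 ≤ c m) (hcs : Summable fun m : ℤ => (1 + |(m : ℝ)|) * c m)
include hc hcs

theorem summable_comp_add_natCast (a : ℤ) : Summable fun i : ℕ => c (a + i) :=
  (hcs.of_nonneg_of_le hc fun m => le_mul_of_one_le_left (hc m) (by simp)).comp_injective
    ((add_right_injective a).comp Nat.cast_injective)

theorem one_add_mul_tsum_comp_add_natCast_le {a : ℤ} (ha : 0 ≤ a) :
    (1 + (a : ℝ)) * ∑' i : ℕ, c (a + i) ≤ ∑' m : ℤ, (1 + |(m : ℝ)|) * c m := by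
  rw [← tsum_mul_left]
  calc ∑' i : ℕ, (1 + (a : ℝ)) * c (a + i)
      ≤ ∑' i : ℕ, (1 + |((a + i : ℤ) : ℝ)|) * c (a + i) := by
        refine ((summable_comp_add_natCast hc hcs a).mul_left _).tsum_le_tsum (fun i => ?_)
          (hcs.comp_injective ((add_right_injective a).comp Nat.cast_injective))
        gcongr
        · exact hc _
        · rw [abs_of_nonneg (by positivity)]
          push_cast
          linarith [(Nat.cast_nonneg i : (0 : ℝ) ≤ i)]
    _ ≤ ∑' m : ℤ, (1 + |(m : ℝ)|) * c m :=
        tsum_comp_le_tsum_of_inj hcs (fun m => mul_nonneg (by positivity) (hc m))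
          ((add_right_injective a).comp Nat.cast_injective)

theorem summable_succ_mul_comp_add_natCast (a : ℤ) :
    Summable fun k : ℕ => ((k : ℝ) + 1) * c (a + k) := by
  refine .of_nonneg_of_le (fun k => mul_nonneg (by positivity) (hc _)) (fun k => ?_)
    ((hcs.comp_injective ((add_right_injective a).comp Nat.cast_injective)).mul_left
      (1 + |(a : ℝ)|))
  have hk : (k : ℝ) + 1 ≤ (1 + |(a : ℝ)|) * (1 + |((a + k : ℤ) : ℝ)|) := by
    have hk' : (k : ℝ) ≤ |((a + k : ℤ) : ℝ)| + |(a : ℝ)| := by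
      push_cast
      linarith [le_abs_self ((a : ℝ) + k), neg_abs_le (a : ℝ)]
    nlinarith [abs_nonneg (a : ℝ), abs_nonneg ((a + k : ℤ) : ℝ)]
  calc ((k : ℝ) + 1) * c (a + k) ≤ (1 + |(a : ℝ)|) * (1 + |((a + k : ℤ) : ℝ)|) * c (a + k) := by
        gcongr
        exact hc _
    _ = _ := mul_assoc _ _ _

theorem summable_tsum_comp_add_natCast (a : ℤ) :
    Summable fun t : ℕ => ∑' i : ℕ, c (a + t + i) := by
  have h := summable_comp_add_of_summable_succ_mul (fun _ => hc _)
    (summable_succ_mul_comp_add_natCast hc hcs a)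
  simp only [Nat.cast_add, ← add_assoc] at h
  exact ((summable_prod_of_nonneg fun _ => hc _).1 h).2

theorem summable_succ_mul_sq_tsum_comp_add_natCast_div_two (b : ℤ) :
    Summable fun k : ℕ => ((k : ℝ) + 1) * (∑' i : ℕ, c (b + (k / 2 : ℕ) + i)) ^ 2 := by
  set D : ℕ → ℝ := fun k => ∑' i : ℕ, c (b + (k / 2 : ℕ) + i)
  have hD : Summable D := by
    have h := summable_tsum_comp_add_natCast hc hcs b
    have hhalf : ∀ t, 2 * t / 2 = t ∧ (2 * t + 1) / 2 = t := fun t => ⟨by omega, by omega⟩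
    refine .even_add_odd ?_ ?_ <;> simpa only [D, hhalf] using h
  refine hD.mul_left (4 * ∑' m : ℤ, (1 + |(m : ℝ)|) * c m) |>.of_norm_bounded_eventually_nat ?_
  filter_upwards [eventually_ge_atTop (4 * b.natAbs)] with k hk
  have hD0 : 0 ≤ D k := tsum_nonneg fun _ => hc _
  have hweight : ((k : ℝ) + 1) ≤ 4 * (1 + ((b + (k / 2 : ℕ) : ℤ) : ℝ)) := by
    have : ((k : ℤ) + 1) ≤ 4 * (1 + (b + (k / 2 : ℕ))) := by omega
    exact_mod_cast this
  have htail := one_add_mul_tsum_comp_add_natCast_le hc hcs (a := b + (k / 2 : ℕ)) (by omega)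
  rw [Real.norm_of_nonneg (by positivity)]
  calc ((k : ℝ) + 1) * D k ^ 2 ≤ 4 * (1 + ((b + (k / 2 : ℕ) : ℤ) : ℝ)) * D k * D k := by
        rw [sq, ← mul_assoc]; gcongr
    _ = 4 * ((1 + ((b + (k / 2 : ℕ) : ℤ) : ℝ)) * D k) * D k := by ring
    _ ≤ 4 * (∑' m : ℤ, (1 + |(m : ℝ)|) * c m) * D k := by gcongr

end WeightedTails

section KernelOperator

variable {ι κ : Type*}

theorem memℓp_two_iff {E : ι → Type*} [∀ i, NormedAddCommGroup (E i)] {f : ∀ i, E i} :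
    Memℓp f 2 ↔ Summable fun i => ‖f i‖ ^ 2 := by
  rw [memℓp_gen_iff (by norm_num)]
  norm_num

theorem lp.norm_sq_eq_tsum {E : ι → Type*} [∀ i, NormedAddCommGroup (E i)] (f : lp E 2) :
    ‖f‖ ^ 2 = ∑' i, ‖f i‖ ^ 2 := by
  simpa using lp.norm_rpow_eq_tsum (p := 2) (by norm_num) f

variable {𝕜 : Type*} [RCLike 𝕜] {K : ι → κ → 𝕜} (hK : Summable fun p : ι × κ => ‖K p.1 p.2‖ ^ 2)
include hK

-- Conjugated so that `⟪kernelRow hK j, f⟫ = ∑' l, K l j * f l`.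
noncomputable def kernelRow (j : κ) : lp (fun _ : ι => 𝕜) 2 :=
  ⟨fun l => conj (K l j), memℓp_two_iff.2 (by simpa using hK.prod_symm.prod_factor j)⟩

theorem norm_kernelRow_sq (j : κ) : ‖kernelRow hK j‖ ^ 2 = ∑' l, ‖K l j‖ ^ 2 := by
  simp [lp.norm_sq_eq_tsum, kernelRow]

theorem summable_norm_kernelRow_sq : Summable fun j => ‖kernelRow hK j‖ ^ 2 := by
  simp only [norm_kernelRow_sq]
  exact hK.prod_symm.prod

theorem norm_inner_kernelRow_sq_le (f : lp (fun _ : ι => 𝕜) 2) (j : κ) :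
    ‖⟪kernelRow hK j, f⟫_𝕜‖ ^ 2 ≤ ‖kernelRow hK j‖ ^ 2 * ‖f‖ ^ 2 := by
  rw [← mul_pow]
  gcongr
  exact norm_inner_le_norm _ _

theorem summable_norm_inner_kernelRow_sq (f : lp (fun _ : ι => 𝕜) 2) :
    Summable fun j => ‖⟪kernelRow hK j, f⟫_𝕜‖ ^ 2 :=
  .of_nonneg_of_le (fun _ => sq_nonneg _) (norm_inner_kernelRow_sq_le hK f)
    ((summable_norm_kernelRow_sq hK).mul_right _)

noncomputable def kernelLinearMap : lp (fun _ : ι => 𝕜) 2 →ₗ[𝕜] lp (fun _ : κ => 𝕜) 2 where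
  toFun f :=
    ⟨fun j => ⟪kernelRow hK j, f⟫_𝕜, memℓp_two_iff.2 (summable_norm_inner_kernelRow_sq hK f)⟩
  map_add' _ _ := lp.ext <| funext fun _ => inner_add_right _ _ _
  map_smul' _ _ := lp.ext <| funext fun _ => inner_smul_right _ _ _

theorem norm_kernelLinearMap_le (f : lp (fun _ : ι => 𝕜) 2) :
    ‖kernelLinearMap hK f‖ ≤ √(∑' j, ‖kernelRow hK j‖ ^ 2) * ‖f‖ := by
  refine le_of_sq_le_sq ?_ (by positivity)
  calc ‖kernelLinearMap hK f‖ ^ 2 = ∑' j, ‖⟪kernelRow hK j, f⟫_𝕜‖ ^ 2 := lp.norm_sq_eq_tsum _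
    _ ≤ ∑' j, ‖kernelRow hK j‖ ^ 2 * ‖f‖ ^ 2 :=
      (summable_norm_inner_kernelRow_sq hK f).tsum_le_tsum (norm_inner_kernelRow_sq_le hK f)
        ((summable_norm_kernelRow_sq hK).mul_right _)
    _ = (√(∑' j, ‖kernelRow hK j‖ ^ 2) * ‖f‖) ^ 2 := by
      rw [tsum_mul_right, mul_pow, Real.sq_sqrt (tsum_nonneg fun _ => sq_nonneg _)]

noncomputable def kernelOperator : lp (fun _ : ι => 𝕜) 2 →L[𝕜] lp (fun _ : κ => 𝕜) 2 :=
  (kernelLinearMap hK).mkContinuous _ (norm_kernelLinearMap_le hK)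

theorem kernelOperator_apply (f : lp (fun _ : ι => 𝕜) 2) (j : κ) :
    kernelOperator hK f j = ∑' l, K l j * f l := by
  change ⟪kernelRow hK j, f⟫_𝕜 = _
  simp [lp.inner_eq_tsum, kernelRow, mul_comm]

theorem kernelOperator_single [DecidableEq ι] (l : ι) (j : κ) :
    kernelOperator hK (lp.single 2 l 1) j = K l j := by
  change ⟪kernelRow hK j, lp.single 2 l 1⟫_𝕜 = _
  simp [lp.inner_single_right, kernelRow]

theorem summable_norm_kernelOperator_single_sq [DecidableEq ι] :
    Summable fun l => ‖kernelOperator hK (lp.single 2 l 1)‖ ^ 2 := by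
  simpa only [lp.norm_sq_eq_tsum, kernelOperator_single] using hK.prod

end KernelOperator

theorem stmt_13
    (c : ℤ → ℝ) (hc : ∀ m, 0 ≤ c m)
    (hcs : Summable (fun m : ℤ => (1 + |(m : ℝ)|) * c m))
    (C : ℤ → ℝ) (hC : ∀ s : ℤ, C s = ∑' j : ℕ, c (Int.fdiv s 2 + 1 + j))
    (F : ℤ → ℤ → ℝ)
    (hFbd : ∀ l m : ℤ, |F l m| ≤ C (l+m))
    (n : ℤ) :
    Summable (fun p : ℕ × ℕ => (F (n + p.1) (n + p.2))^2) ∧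
    ∃ T : lp (fun _ : ℕ => ℂ) 2 →L[ℂ] lp (fun _ : ℕ => ℂ) 2,
      (∀ f : lp (fun _ : ℕ => ℂ) 2, ∀ j : ℕ,
        T f j = ∑' l : ℕ, (F (n + l) (n + j) : ℂ) * f l) ∧
      Summable (fun l : ℕ => ‖T (lp.single 2 l 1)‖^2) := by
  set D : ℕ → ℝ := fun k => ∑' i : ℕ, c (n + 1 + (k / 2 : ℕ) + i)
  have hCD : ∀ l j : ℕ, C (n + l + (n + j)) = D (l + j) := fun l j => by
    rw [hC]
    refine tsum_congr fun i => congrArg c ?_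
    rw [Int.fdiv_eq_ediv_of_nonneg _ (by norm_num)]
    push_cast
    omega
  have hF : Summable fun p : ℕ × ℕ => F (n + p.1) (n + p.2) ^ 2 := by
    refine .of_nonneg_of_le (fun _ => sq_nonneg _) (fun p => ?_)
      (summable_comp_add_of_summable_succ_mul (fun k => sq_nonneg (D k))
        (summable_succ_mul_sq_tsum_comp_add_natCast_div_two hc hcs (n + 1)))
    rw [← sq_abs, ← hCD]
    exact pow_le_pow_left₀ (abs_nonneg _) (hFbd _ _) 2
  set K : ℕ → ℕ → ℂ := fun l j => F (n + l) (n + j)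
  have hK : Summable fun p : ℕ × ℕ => ‖K p.1 p.2‖ ^ 2 := by
    simpa [K] using hF
  exact ⟨hF, kernelOperator hK, kernelOperator_apply hK, summable_norm_kernelOperator_single_sq hK⟩
end

section
/- Let μ be a finite positive Borel measure on the unit circle {w ∈ ℂ : |w| = 1} invariant under complex conjugation w ↦ w̄, let {e_m}_{m∈ℤ} be an orthonormal basis of L²(μ) with e_m(w̄) = conj(e_m(w)) for μ-a.e. w and every m, and let R ∈ L^∞(μ) satisfy |R(w)| ≤ 1 μ-a.e., |R(w)| < 1 μ-a.e., and R(w̄) = conj(R(w)) μ-a.e. Let γ_1,...,γ_q > 0 and v_1,...,v_q : ℤ → ℝ. Define F(l,m) = ∫ R(w) e_l(w) e_m(w) dμ(w) + Σ_{k=1}^{q} γ_k v_k(l) v_k(m); then F is real-valued and symmetric. Fix n ∈ ℤ, assume Σ_{j≥0} v_k(n+j)² < ∞ for each k, and assume the operator (ℱ_n f)(j) = Σ_{l≥0} F(n+l, n+j) f(l) is a compact self-adjoint operator on ℓ²(ℕ₀). Then 1 + ℱ_n is positive definite: ⟨f, (1 + ℱ_n) f⟩ > 0 for all f ≠ 0;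 consequently there is ε_n > 0 with 1 + ℱ_n ≥ ε_n, the operator 1 + ℱ_n is boundedly invertible, and for any constant κ the equation (1 + ℱ_n) x = κ δ_0 has a unique solution x ∈ ℓ²(ℕ₀). -/
/-!
Expanding `f ∈ ℓ²(ℕ₀)` along the orthonormal family `l ↦ e_{n+l}` gives an isometry
`U : ℓ² → L²(μ)`, and the quadratic form becomes
`⟨f, (1 + ℱ_n) f⟩ = ‖f‖² + ∫ R (U f) (U f̄) dμ + Σ_k γ_k |Σ_l v_k(n+l) f(l)|²`.
Since `|R| < 1` a.e., the integral is strictly smaller than `‖U f‖ ‖U f̄‖ = ‖f‖²` in modulus,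
so the form is positive definite. Then `1 + ℱ_n` is injective, hence invertible by the Fredholm
alternative for the compact operator `ℱ_n`; a positive invertible operator has spectrum in some
`[ε, ∞)`, which is the lower bound `1 + ℱ_n ≥ ε`.
-/

open MeasureTheory Filter ComplexConjugate
open scoped ENNReal

theorem integral_comp_conj_of_map_conj {E : Type*} [NormedAddCommGroup E] [NormedSpace ℝ E]
    {μ : Measure ℂ} (hμ : μ.map (starRingEnd ℂ) = μ) (g : ℂ → E) :
    ∫ w, g (conj w) ∂μ = ∫ w, g w ∂μ :=
  (MeasurePreserving.mk Complex.continuous_conj.measurable hμ).integral_comp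
    Complex.conjCLE.toHomeomorph.measurableEmbedding g

theorem im_integral_eq_zero_of_conj {μ : Measure ℂ} (hμ : μ.map (starRingEnd ℂ) = μ)
    {g : ℂ → ℂ} (hg : ∀ᵐ w ∂μ, g (conj w) = conj (g w)) : (∫ w, g w ∂μ).im = 0 := by
  refine Complex.conj_eq_iff_im.mp ?_
  calc conj (∫ w, g w ∂μ) = ∫ w, g (conj w) ∂μ :=
        integral_conj.symm.trans (integral_congr_ae (hg.mono fun w hw => hw.symm))
    _ = ∫ w, g w ∂μ := integral_comp_conj_of_map_conj hμ g

section Integral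

variable {α : Type*} [MeasurableSpace α] {μ : Measure α}

theorem integral_mul_lt_integral_of_lt_one {φ c : α → ℝ} (hφ : Integrable φ μ)
    (hφ0 : 0 ≤ᵐ[μ] φ) (hc : AEStronglyMeasurable c μ) (hc0 : ∀ᵐ w ∂μ, 0 ≤ c w)
    (hc1 : ∀ᵐ w ∂μ, c w < 1) (hφne : ¬ φ =ᵐ[μ] 0) : ∫ w, c w * φ w ∂μ < ∫ w, φ w ∂μ := by
  have hcφ : Integrable (fun w => c w * φ w) μ :=
    hφ.bdd_mul hc ((hc0.and hc1).mono fun w hw => by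
      rw [Real.norm_eq_abs, abs_of_nonneg hw.1]; exact hw.2.le)
  have hgap0 : 0 ≤ᵐ[μ] fun w => (1 - c w) * φ w := by
    filter_upwards [hφ0, hc1] with w h1 h2
    exact mul_nonneg (by linarith) h1
  have hsplit : ∫ w, (1 - c w) * φ w ∂μ = ∫ w, φ w ∂μ - ∫ w, c w * φ w ∂μ := by
    rw [← integral_sub hφ hcφ]
    exact integral_congr_ae (Eventually.of_forall fun w => by simp only; ring)
  have hgap : 0 < ∫ w, (1 - c w) * φ w ∂μ := by
    refine (integral_nonneg_of_ae hgap0).lt_of_ne fun h => hφne ?_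
    have hgap_int : Integrable (fun w => (1 - c w) * φ w) μ :=
      (hφ.sub hcφ).congr (Eventually.of_forall fun w => by simp only [Pi.sub_apply]; ring)
    filter_upwards [(integral_eq_zero_iff_of_nonneg_ae hgap0 hgap_int).mp h.symm, hc1]
      with w h1 h2
    exact (mul_eq_zero.mp h1).resolve_left (by linarith)
  linarith

namespace MeasureTheory.L2

theorem integrable_mul (g h : Lp ℂ 2 μ) : Integrable (fun w => g w * h w) μ :=
  (L1.integrable_coeFn ((ContinuousLinearMap.mul ℂ ℂ).holder 1 g h)).congr
    ((ContinuousLinearMap.mul ℂ ℂ).coeFn_holder g h)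

theorem integral_norm_mul_le (g h : Lp ℂ 2 μ) : ∫ w, ‖g w * h w‖ ∂μ ≤ ‖g‖ * ‖h‖ := by
  let B := ContinuousLinearMap.mul ℂ ℂ
  calc ∫ w, ‖g w * h w‖ ∂μ = ‖B.holder 1 g h‖ := by
        rw [L1.norm_eq_integral_norm]
        exact integral_congr_ae ((B.coeFn_holder (r := 1) g h).mono fun w hw => by
          simp only [hw]; rfl)
    _ ≤ ‖B‖ * ‖g‖ * ‖h‖ := B.norm_holder_apply_apply_le g h
    _ ≤ 1 * ‖g‖ * ‖h‖ := by gcongr; exact ContinuousLinearMap.opNorm_mul_le ℂ ℂ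
    _ = ‖g‖ * ‖h‖ := by rw [one_mul]

theorem norm_integral_mul_mul_lt {R : α → ℂ} (hR : AEStronglyMeasurable R μ)
    (hR1 : ∀ᵐ w ∂μ, ‖R w‖ < 1) {g h : Lp ℂ 2 μ} (hg : g ≠ 0) (hh : h ≠ 0) :
    ‖∫ w, R w * g w * h w ∂μ‖ < ‖g‖ * ‖h‖ := by
  set φ : α → ℝ := fun w => ‖g w * h w‖
  have hle : ‖∫ w, R w * g w * h w ∂μ‖ ≤ ∫ w, ‖R w‖ * φ w ∂μ :=
    (norm_integral_le_integral_norm _).trans_eq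
      (integral_congr_ae (Eventually.of_forall fun w => by simp [φ, mul_assoc]))
  refine hle.trans_lt ?_
  by_cases hφ0 : φ =ᵐ[μ] 0
  · rw [integral_eq_zero_of_ae (hφ0.mono fun w hw => by simp [hw])]
    exact mul_pos (norm_pos_iff.mpr hg) (norm_pos_iff.mpr hh)
  · exact (integral_mul_lt_integral_of_lt_one (integrable_mul g h).norm
      (Eventually.of_forall fun w => norm_nonneg _) hR.norm
      (Eventually.of_forall fun w => norm_nonneg _) hR1 hφ0).trans_le (integral_norm_mul_le g h)

noncomputable def mulPairing (r : Lp ℂ ∞ μ) : Lp ℂ 2 μ →L[ℂ] Lp ℂ 2 μ →L[ℂ] ℂ :=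
  ((ContinuousLinearMap.mul ℂ ℂ).lpPairing μ 2 2).comp
    ((ContinuousLinearMap.mul ℂ ℂ).holderL μ ∞ 2 2 r)

theorem mulPairing_apply (r : Lp ℂ ∞ μ) (g h : Lp ℂ 2 μ) :
    mulPairing r g h = ∫ w, r w * g w * h w ∂μ := by
  rw [mulPairing, ContinuousLinearMap.comp_apply, ContinuousLinearMap.lpPairing_eq_integral]
  refine integral_congr_ae ?_
  filter_upwards [(ContinuousLinearMap.mul ℂ ℂ).coeFn_holder (r := 2) r g] with w hw
  simp [hw]

theorem mulPairing_toLp {R g h : α → ℂ} (hR : MemLp R ∞ μ) (hg : MemLp g 2 μ)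
    (hh : MemLp h 2 μ) :
    mulPairing (hR.toLp R) (hg.toLp g) (hh.toLp h) = ∫ w, R w * g w * h w ∂μ := by
  rw [mulPairing_apply]
  refine integral_congr_ae ?_
  filter_upwards [hR.coeFn_toLp, hg.coeFn_toLp, hh.coeFn_toLp] with w h1 h2 h3
  rw [h1, h2, h3]

theorem norm_mulPairing_lt {r : Lp ℂ ∞ μ} (hr : ∀ᵐ w ∂μ, ‖r w‖ < 1) {g h : Lp ℂ 2 μ}
    (hg : g ≠ 0) (hh : h ≠ 0) : ‖mulPairing r g h‖ < ‖g‖ * ‖h‖ := by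
  rw [mulPairing_apply]
  exact norm_integral_mul_mul_lt (Lp.aestronglyMeasurable r) hr hg hh

theorem orthonormal_toLp {ι : Type*} [DecidableEq ι] {e : ι → α → ℂ}
    (he : ∀ i, MemLp (e i) 2 μ)
    (horth : ∀ i j, ∫ w, conj (e i w) * e j w ∂μ = if i = j then 1 else 0) :
    Orthonormal ℂ fun i => (he i).toLp (e i) := by
  rw [orthonormal_iff_ite]
  intro i j
  rw [← horth, inner_def]
  refine integral_congr_ae ?_
  filter_upwards [(he i).coeFn_toLp, (he j).coeFn_toLp] with w hi hj
  rw [RCLike.inner_apply', hi, hj]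

end MeasureTheory.L2

end Integral

section Kernel

variable {ι κ H : Type*} [Fintype κ] [NormedAddCommGroup H] [InnerProductSpace ℂ H]
  [CompleteSpace H] {V : ι → H}

theorem Orthonormal.hasSum_linearIsometry (hV : Orthonormal ℂ V) (f : lp (fun _ : ι => ℂ) 2) :
    HasSum (fun i => f i • V i) (hV.orthogonalFamily.linearIsometry f) := by
  simpa using hV.orthogonalFamily.hasSum_linearIsometry f

theorem summable_ofReal_mul_of_summable_sq {a : ι → ℝ} (ha : Summable fun i => a i ^ 2)
    (f : lp (fun _ : ι => ℂ) 2) : Summable fun i => (a i : ℂ) * f i := by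
  have hA : Memℓp (fun i => (a i : ℂ)) 2 := memℓp_gen (by simpa using ha)
  have := (lp.hasSum_inner (𝕜 := ℂ) (⟨_, hA⟩ : lp (fun _ : ι => ℂ) 2) f).summable
  refine this.congr fun i => ?_
  simp [RCLike.inner_apply, mul_comm]

theorem Orthonormal.inner_apply_eq_of_kernel (hV : Orthonormal ℂ V) (β : H →L[ℂ] H →L[ℂ] ℂ)
    (γ : κ → ℝ) {a : κ → ι → ℝ} (ha : ∀ k, Summable fun i => a k i ^ 2)
    {T : lp (fun _ : ι => ℂ) 2 →L[ℂ] lp (fun _ : ι => ℂ) 2}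
    (hT : ∀ f j, T f j = ∑' l, (β (V l) (V j) + ∑ k, (γ k : ℂ) * a k l * a k j) * f l)
    (f : lp (fun _ : ι => ℂ) 2) :
    inner ℂ f (T f) = β (hV.orthogonalFamily.linearIsometry f)
        (hV.orthogonalFamily.linearIsometry (star f)) +
      ((∑ k, γ k * ‖∑' l, (a k l : ℂ) * f l‖ ^ 2 : ℝ) : ℂ) := by
  set U := hV.orthogonalFamily.linearIsometry
  set t : κ → ℂ := fun k => ∑' l, (a k l : ℂ) * f l
  have ht : ∀ k, HasSum (fun l => (a k l : ℂ) * f l) (t k) := fun k =>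
    (summable_ofReal_mul_of_summable_sq (ha k) f).hasSum
  have hTf : ∀ j, T f j = β (U f) (V j) + ∑ k, (γ k : ℂ) * a k j * t k := by
    intro j
    rw [hT]
    refine HasSum.tsum_eq ?_
    have hβ : HasSum (fun l => f l * β (V l) (V j)) (β (U f) (V j)) := by
      simpa using (β.flip (V j)).hasSum (hV.hasSum_linearIsometry f)
    have hrank : HasSum (fun l => ∑ k, (γ k : ℂ) * a k j * ((a k l : ℂ) * f l))
        (∑ k, (γ k : ℂ) * a k j * t k) :=
      hasSum_sum fun k _ => (ht k).mul_left _
    convert hβ.add hrank using 1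
    ext l
    simp only [add_mul, Finset.sum_mul]
    congr 1
    · ring
    · exact Finset.sum_congr rfl fun k _ => by ring
  have hβ : HasSum (fun j => conj (f j) * β (U f) (V j)) (β (U f) (U (star f))) := by
    have := (β (U f)).hasSum (hV.hasSum_linearIsometry (star f))
    simp only [map_smul, smul_eq_mul, lp.star_apply] at this
    exact this
  have hrank : HasSum (fun j => ∑ k, (γ k : ℂ) * conj ((a k j : ℂ) * f j) * t k)
      (∑ k, (γ k : ℂ) * conj (t k) * t k) :=
    hasSum_sum fun k _ => ((Complex.hasSum_conj'.mpr (ht k)).mul_left _).mul_right _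
  have hsum : HasSum (fun j => inner ℂ (f j) (T f j))
      (β (U f) (U (star f)) + ∑ k, (γ k : ℂ) * conj (t k) * t k) := by
    convert hβ.add hrank using 2 with j
    simp only [hTf, RCLike.inner_apply, add_mul, Finset.sum_mul, map_mul, Complex.conj_ofReal]
    congr 1
    · ring
    · exact Finset.sum_congr rfl fun k _ => by ring
  rw [(lp.hasSum_inner f (T f)).unique hsum]
  push_cast
  simp only [mul_assoc, Complex.conj_mul', t]

theorem Orthonormal.re_inner_add_apply_pos_of_kernel (hV : Orthonormal ℂ V)
    {β : H →L[ℂ] H →L[ℂ] ℂ} (hβ : ∀ g h, g ≠ 0 → h ≠ 0 → ‖β g h‖ < ‖g‖ * ‖h‖)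
    {γ : κ → ℝ} (hγ : ∀ k, 0 ≤ γ k) {a : κ → ι → ℝ} (ha : ∀ k, Summable fun i => a k i ^ 2)
    {T : lp (fun _ : ι => ℂ) 2 →L[ℂ] lp (fun _ : ι => ℂ) 2}
    (hT : ∀ f j, T f j = ∑' l, (β (V l) (V j) + ∑ k, (γ k : ℂ) * a k l * a k j) * f l)
    {f : lp (fun _ : ι => ℂ) 2} (hf : f ≠ 0) : 0 < (inner ℂ f (f + T f)).re := by
  have hform := hV.inner_apply_eq_of_kernel β γ ha hT f
  set U := hV.orthogonalFamily.linearIsometry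
  have hnorm : ‖U f‖ * ‖U (star f)‖ = ‖f‖ ^ 2 := by
    rw [U.norm_map, U.norm_map, norm_star, sq]
  have hβlt : ‖β (U f) (U (star f))‖ < ‖f‖ ^ 2 := by
    refine hnorm ▸ hβ _ _ ?_ ?_ <;> rw [← norm_ne_zero_iff, U.norm_map]
    · exact norm_ne_zero_iff.mpr hf
    · exact norm_ne_zero_iff.mpr (star_ne_zero.mpr hf)
  have hrank : 0 ≤ ∑ k, γ k * ‖∑' l, (a k l : ℂ) * f l‖ ^ 2 :=
    Finset.sum_nonneg fun k _ => mul_nonneg (hγ k) (sq_nonneg _)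
  have hself : (inner ℂ f f).re = ‖f‖ ^ 2 := inner_self_eq_norm_sq (𝕜 := ℂ) f
  rw [inner_add_right, Complex.add_re, hself, hform, Complex.add_re, Complex.ofReal_re]
  linarith [neg_le_of_abs_le (Complex.abs_re_le_norm (β (U f) (U (star f))))]

end Kernel

section Operator

theorem IsCompactOperator.isUnit_one_add {𝕜 X : Type*} [NontriviallyNormedField 𝕜]
    [NormedAddCommGroup X] [NormedSpace 𝕜 X] [CompleteSpace X] {T : X →L[𝕜] X}
    (hT : IsCompactOperator T) (hinj : Function.Injective ⇑(1 + T)) : IsUnit (1 + T) := by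
  have hnot : ¬ Module.End.HasEigenvalue (T : Module.End 𝕜 X) (-1) := by
    intro h
    obtain ⟨x, hx⟩ := h.exists_hasEigenvector
    refine hx.2 (hinj ?_)
    have := hx.apply_eq_smul
    simp_all
  have hres :=
    (hT.hasEigenvalue_or_mem_resolventSet (neg_ne_zero.mpr one_ne_zero)).resolve_left hnot
  rw [spectrum.mem_resolventSet_iff] at hres
  convert hres.neg using 1
  simp
  abel

variable {E : Type*} [NormedAddCommGroup E] [InnerProductSpace ℂ E]

theorem ContinuousLinearMap.injective_one_add_of_re_inner_pos {T : E →L[ℂ] E}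
    (hpos : ∀ x, x ≠ 0 → 0 < (inner ℂ x (x + T x)).re) : Function.Injective ⇑(1 + T) := by
  refine (injective_iff_map_eq_zero _).mpr fun x hx => by_contra fun hne => ?_
  have := hpos x hne
  rw [show x + T x = 0 from hx, inner_zero_right, Complex.zero_re] at this
  exact this.false

variable [CompleteSpace E]

theorem ContinuousLinearMap.exists_pos_mul_norm_sq_le_of_isUnit {A : E →L[ℂ] E} (hA : 0 ≤ A)
    (hunit : IsUnit A) : ∃ ε : ℝ, 0 < ε ∧ ∀ x, ε * ‖x‖ ^ 2 ≤ (inner ℂ x (A x)).re := by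
  cases subsingleton_or_nontrivial E
  · exact ⟨1, one_pos, fun x => by simp [Subsingleton.elim x 0]⟩
  have hsp : IsStrictlyPositive A := IsStrictlyPositive.iff_of_unital.mpr ⟨hA, hunit⟩
  obtain ⟨ε, hε, hle⟩ := (CFC.exists_pos_algebraMap_le_iff hsp.isSelfAdjoint).mpr
    fun _ hx => hsp.spectrum_pos hx
  refine ⟨ε, hε, fun x => ?_⟩
  have := ((ContinuousLinearMap.le_def _ _).mp hle).re_inner_nonneg_right x
  simpa [inner_sub_right, inner_smul_right_eq_smul, inner_self_eq_norm_sq_to_K,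
    ← Complex.ofReal_pow] using this

theorem ContinuousLinearMap.one_add_nonneg_of_re_inner_pos {T : E →L[ℂ] E}
    (hT : IsSelfAdjoint T) (hpos : ∀ x, x ≠ 0 → 0 < (inner ℂ x (x + T x)).re) : 0 ≤ 1 + T := by
  rw [ContinuousLinearMap.nonneg_iff_isPositive, ContinuousLinearMap.isPositive_def']
  refine ⟨(IsSelfAdjoint.one _).add hT, fun x => ?_⟩
  rw [ContinuousLinearMap.reApplyInnerSelf_apply, inner_re_symm]
  rcases eq_or_ne x 0 with rfl | hx
  · simp
  · exact (hpos x hx).le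

end Operator

theorem stmt_14_general
    (μ : Measure ℂ) [IsFiniteMeasure μ]
    (hconj : μ.map (starRingEnd ℂ) = μ)
    (e : ℤ → ℂ → ℂ)
    (heL2 : ∀ m : ℤ, MemLp (e m) 2 μ)
    (horth : ∀ m m' : ℤ,
      (∫ w, (starRingEnd ℂ) (e m w) * e m' w ∂μ) = if m = m' then 1 else 0)
    (hereal : ∀ m : ℤ, ∀ᵐ w ∂μ, e m ((starRingEnd ℂ) w) = (starRingEnd ℂ) (e m w))
    (R : ℂ → ℂ) (hRmeas : Measurable R)
    (hRlt : ∀ᵐ w ∂μ, ‖R w‖ < 1)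
    (hRconj : ∀ᵐ w ∂μ, R ((starRingEnd ℂ) w) = (starRingEnd ℂ) (R w))
    (q : ℕ) (γ : Fin q → ℝ) (hγ : ∀ k, 0 < γ k)
    (v : Fin q → ℤ → ℝ)
    (F : ℤ → ℤ → ℂ)
    (hF : ∀ l m : ℤ, F l m =
      (∫ w, R w * e l w * e m w ∂μ) + ∑ k, (γ k : ℂ) * (v k l : ℂ) * (v k m : ℂ))
    (n : ℤ)
    (hv2 : ∀ k, Summable (fun j : ℕ => (v k (n + j))^2))
    (T : lp (fun _ : ℕ => ℂ) 2 →L[ℂ] lp (fun _ : ℕ => ℂ) 2)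
    (hT : ∀ f : lp (fun _ : ℕ => ℂ) 2, ∀ j : ℕ,
      T f j = ∑' l : ℕ, F (n + l) (n + j) * f l)
    (hTsa : IsSelfAdjoint T) (hTcpt : IsCompactOperator ⇑T) :
    (∀ l m : ℤ, (F l m).im = 0 ∧ F l m = F m l) ∧
    (∀ f : lp (fun _ : ℕ => ℂ) 2, f ≠ 0 →
      0 < (inner ℂ f (f + T f) : ℂ).re) ∧
    (∃ ε : ℝ, 0 < ε ∧ ∀ f : lp (fun _ : ℕ => ℂ) 2,
      ε * ‖f‖^2 ≤ (inner ℂ f (f + T f) : ℂ).re) ∧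
    (∃ S : lp (fun _ : ℕ => ℂ) 2 →L[ℂ] lp (fun _ : ℕ => ℂ) 2,
      (∀ f, S f + T (S f) = f) ∧ (∀ f, S (f + T f) = f)) ∧
    (∀ κ : ℂ, ∃! x : lp (fun _ : ℕ => ℂ) 2, x + T x = κ • lp.single 2 0 1) := by
  have hreal : ∀ l m : ℤ, (F l m).im = 0 ∧ F l m = F m l := fun l m => by
    refine ⟨?_, ?_⟩
    · rw [hF, Complex.add_im, im_integral_eq_zero_of_conj hconj ?_]
      · simp [Complex.im_sum]
      · filter_upwards [hRconj, hereal l, hereal m] with w h1 h2 h3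
        simp [h1, h2, h3]
    · simp only [hF, mul_right_comm _ (e l _), mul_right_comm _ (v _ l : ℂ)]
  have hR : MemLp R ∞ μ :=
    memLp_top_of_bound hRmeas.aestronglyMeasurable 1 (hRlt.mono fun _ hw => hw.le)
  have hV := (L2.orthonormal_toLp heL2 horth).comp (fun l : ℕ => n + l)
    fun _ _ h => by simpa using h
  have hpos : ∀ f : lp (fun _ : ℕ => ℂ) 2, f ≠ 0 → 0 < (inner ℂ f (f + T f) : ℂ).re := by
    refine fun f hf => hV.re_inner_add_apply_pos_of_kernel (β := L2.mulPairing (hR.toLp R))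
      (fun g h hg hh => L2.norm_mulPairing_lt ?_ hg hh) (fun k => (hγ k).le) hv2
      (fun f j => ?_) hf
    · filter_upwards [hR.coeFn_toLp, hRlt] with w h1 h2
      rwa [h1]
    · rw [hT]
      refine tsum_congr fun l => ?_
      rw [hF, Function.comp_apply, Function.comp_apply, L2.mulPairing_toLp]
  have hunit : IsUnit (1 + T) :=
    hTcpt.isUnit_one_add (ContinuousLinearMap.injective_one_add_of_re_inner_pos hpos)
  obtain ⟨ε, hε, hgap⟩ := ContinuousLinearMap.exists_pos_mul_norm_sq_le_of_isUnit
    (ContinuousLinearMap.one_add_nonneg_of_re_inner_pos hTsa hpos) hunit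
  refine ⟨hreal, hpos, ⟨ε, hε, hgap⟩, ⟨↑hunit.unit⁻¹, fun f => ?_, fun f => ?_⟩, fun κ => ?_⟩
  · exact congrArg (· f) hunit.mul_val_inv
  · exact congrArg (· f) hunit.val_inv_mul
  · exact (ContinuousLinearMap.isUnit_iff_bijective.mp hunit).existsUnique _

theorem stmt_14
    (μ : Measure ℂ) [IsFiniteMeasure μ]
    (hcirc : ∀ᵐ w ∂μ, ‖w‖ = 1)
    (hconj : μ.map (starRingEnd ℂ) = μ)
    (e : ℤ → ℂ → ℂ)
    (heL2 : ∀ m : ℤ, MemLp (e m) 2 μ)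
    (horth : ∀ m m' : ℤ,
      (∫ w, (starRingEnd ℂ) (e m w) * e m' w ∂μ) = if m = m' then 1 else 0)
    (hcomplete : ∀ h : ℂ → ℂ, MemLp h 2 μ →
      (∀ m : ℤ, (∫ w, (starRingEnd ℂ) (e m w) * h w ∂μ) = 0) → h =ᵐ[μ] 0)
    (hereal : ∀ m : ℤ, ∀ᵐ w ∂μ, e m ((starRingEnd ℂ) w) = (starRingEnd ℂ) (e m w))
    (R : ℂ → ℂ) (hRmeas : Measurable R)
    (hRle : ∀ᵐ w ∂μ, ‖R w‖ ≤ 1)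
    (hRlt : ∀ᵐ w ∂μ, ‖R w‖ < 1)
    (hRconj : ∀ᵐ w ∂μ, R ((starRingEnd ℂ) w) = (starRingEnd ℂ) (R w))
    (q : ℕ) (γ : Fin q → ℝ) (hγ : ∀ k, 0 < γ k)
    (v : Fin q → ℤ → ℝ)
    (F : ℤ → ℤ → ℂ)
    (hF : ∀ l m : ℤ, F l m =
      (∫ w, R w * e l w * e m w ∂μ) + ∑ k, (γ k : ℂ) * (v k l : ℂ) * (v k m : ℂ))
    (n : ℤ)
    (hv2 : ∀ k, Summable (fun j : ℕ => (v k (n + j))^2))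
    (T : lp (fun _ : ℕ => ℂ) 2 →L[ℂ] lp (fun _ : ℕ => ℂ) 2)
    (hT : ∀ f : lp (fun _ : ℕ => ℂ) 2, ∀ j : ℕ,
      T f j = ∑' l : ℕ, F (n + l) (n + j) * f l)
    (hTsa : IsSelfAdjoint T) (hTcpt : IsCompactOperator ⇑T) :
    (∀ l m : ℤ, (F l m).im = 0 ∧ F l m = F m l) ∧
    (∀ f : lp (fun _ : ℕ => ℂ) 2, f ≠ 0 →
      0 < (inner ℂ f (f + T f) : ℂ).re) ∧
    (∃ ε : ℝ, 0 < ε ∧ ∀ f : lp (fun _ : ℕ => ℂ) 2,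
      ε * ‖f‖^2 ≤ (inner ℂ f (f + T f) : ℂ).re) ∧
    (∃ S : lp (fun _ : ℕ => ℂ) 2 →L[ℂ] lp (fun _ : ℕ => ℂ) 2,
      (∀ f, S f + T (S f) = f) ∧ (∀ f, S (f + T f) = f)) ∧
    (∀ κ : ℂ, ∃! x : lp (fun _ : ℕ => ℂ) 2, x + T x = κ • lp.single 2 0 1) :=
  stmt_14_general μ hconj e heL2 horth hereal R hRmeas hRlt hRconj q γ hγ v F hF n hv2 T hT hTsa
    hTcpt
end

section
/- Let a : ℤ → (0,∞), b : ℤ → ℝ, λ ∈ ℝ, and let ψ_+ and ψ_- be solutions of τu = λu such that W(ψ_-, conj ψ_-) = -W(ψ_+, conj ψ_+) ≠ 0 (note conj ψ_± are again solutions since λ, a, b are real, so all these Wronskians are independent of n). Define α = W(ψ_-, ψ_+) / W(ψ_-, conj ψ_-) and β_± = W(ψ_∓, conj ψ_±) / W(ψ_±, conj ψ_±). Then: (i) the scattering relations ψ_+ = α conj(ψ_-) + β_- ψ_- and ψ_- = α conj(ψ_+) + β_+ ψ_+ hold; (ii) conj(β_+) = -β_-; (iii) |α|² = 1 + |β_+|²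 = 1 + |β_-|², and in particular |α| ≥ 1. -/
/-!
Solutions of `τ u = z u` form a two-dimensional space: a solution is determined by its values at
`0` and `1`, because `a n ≠ 0` lets the recurrence be solved in both directions. Hence Cramer's rule
for the Wronskian `W(u, v) = a 0 (u 0 v 1 - u 1 v 0)` holds for solutions as functions, which gives
the scattering relations (i). Since `a`, `b`, `λ` are real, conjugation maps solutions to solutions and
conjugates Wronskians, which gives (ii). Substituting `ψ₋ = α ψ̄₊ + β₊ ψ₊` into `W(ψ₋, ψ̄₋)` gives
`(|β₊|² - |α|²) W(ψ₊, ψ̄₊)`, and `W(ψ₋, ψ̄₋) = -W(ψ₊, ψ̄₊) ≠ 0` turns this into (iii).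
-/

open ComplexConjugate

section CommRing

variable {R : Type*} [CommRing R]

def jacobiSolutions (a b : ℤ → R) (z : R) : Submodule R (ℤ → R) where
  carrier := {u | ∀ n, a n * u (n + 1) + a (n - 1) * u (n - 1) + b n * u n = z * u n}
  add_mem' {u v} hu hv n := by
    simp only [Pi.add_apply]
    linear_combination hu n + hv n
  zero_mem' n := by simp
  smul_mem' c u hu n := by
    simp only [Pi.smul_apply, smul_eq_mul]
    linear_combination c * hu n

/-- The Wronskian at `n = 0`; its independence of `n` is never needed. -/
def wronskian (a u v : ℤ → R) : R := a 0 * (u 0 * v 1 - u 1 * v 0)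

theorem wronskian_swap (a u v : ℤ → R) : wronskian a v u = -wronskian a u v := by
  unfold wronskian; ring

theorem eq_zero_of_mem_jacobiSolutions [NoZeroDivisors R] {a b : ℤ → R} {z : R}
    (ha : ∀ n, a n ≠ 0) {u : ℤ → R} (hu : u ∈ jacobiSolutions a b z)
    (h0 : u 0 = 0) (h1 : u 1 = 0) : u = 0 := by
  suffices h : ∀ n : ℤ, u n = 0 ∧ u (n + 1) = 0 from funext fun n => (h n).1
  intro n
  induction n using Int.induction_on with
  | zero => exact ⟨h0, h1⟩
  | succ k ih =>
    have hk := hu (k + 1)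
    rw [add_sub_cancel_right, ih.1, ih.2] at hk
    refine ⟨ih.2, (mul_eq_zero.mp (?_ : a (k + 1) * u (k + 1 + 1) = 0)).resolve_left (ha _)⟩
    linear_combination hk
  | pred k ih =>
    have hk := hu (-k)
    rw [ih.1, ih.2] at hk
    refine ⟨(mul_eq_zero.mp (?_ : a (-k - 1) * u (-k - 1) = 0)).resolve_left (ha _), ?_⟩
    · linear_combination hk
    · simpa using ih.1

theorem eq_of_mem_jacobiSolutions [NoZeroDivisors R] {a b : ℤ → R} {z : R}
    (ha : ∀ n, a n ≠ 0) {u v : ℤ → R} (hu : u ∈ jacobiSolutions a b z)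
    (hv : v ∈ jacobiSolutions a b z) (h0 : u 0 = v 0) (h1 : u 1 = v 1) : u = v :=
  sub_eq_zero.mp <| eq_zero_of_mem_jacobiSolutions ha (sub_mem hu hv)
    (sub_eq_zero.mpr h0) (sub_eq_zero.mpr h1)

theorem wronskian_smul_eq_of_mem_jacobiSolutions [NoZeroDivisors R] {a b : ℤ → R} {z : R}
    (ha : ∀ n, a n ≠ 0) {u v w : ℤ → R} (hu : u ∈ jacobiSolutions a b z)
    (hv : v ∈ jacobiSolutions a b z) (hw : w ∈ jacobiSolutions a b z) :
    wronskian a u v • w = wronskian a w v • u + wronskian a u w • v := by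
  refine eq_of_mem_jacobiSolutions ha (Submodule.smul_mem _ _ hw)
    (add_mem (Submodule.smul_mem _ _ hu) (Submodule.smul_mem _ _ hv)) ?_ ?_ <;>
  · simp only [Pi.add_apply, Pi.smul_apply, smul_eq_mul, wronskian]; ring

end CommRing

theorem apply_eq_of_mem_jacobiSolutions {K : Type*} [Field K] {a b : ℤ → K} {z : K}
    (ha : ∀ n, a n ≠ 0) {u v w : ℤ → K} (hu : u ∈ jacobiSolutions a b z)
    (hv : v ∈ jacobiSolutions a b z) (hw : w ∈ jacobiSolutions a b z)
    (huv : wronskian a u v ≠ 0) (n : ℤ) :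
    w n = wronskian a w v / wronskian a u v * u n + wronskian a u w / wronskian a u v * v n := by
  have h := congrFun (wronskian_smul_eq_of_mem_jacobiSolutions ha hu hv hw) n
  simp only [Pi.add_apply, Pi.smul_apply, smul_eq_mul] at h
  field_simp
  linear_combination h

theorem conj_mem_jacobiSolutions {a b : ℤ → ℝ} {z : ℝ} {u : ℤ → ℂ}
    (hu : u ∈ jacobiSolutions (fun n => (a n : ℂ)) (fun n => (b n : ℂ)) z) :
    (fun n => conj (u n)) ∈ jacobiSolutions (fun n => (a n : ℂ)) (fun n => (b n : ℂ)) z :=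
  fun n => by simpa using congrArg conj (hu n)

theorem conj_wronskian (a : ℤ → ℝ) (u v : ℤ → ℂ) :
    conj (wronskian (fun n => (a n : ℂ)) u v) =
      wronskian (fun n => (a n : ℂ)) (fun n => conj (u n)) (fun n => conj (v n)) := by
  simp [wronskian]

theorem wronskian_conj_of_apply_eq (a : ℤ → ℂ) {u v : ℤ → ℂ} (α β : ℂ)
    (h : ∀ n, v n = α * conj (u n) + β * u n) :
    wronskian a v (fun n => conj (v n)) =
      (Complex.normSq β - Complex.normSq α) * wronskian a u (fun n => conj (u n)) := by
  simp only [wronskian, h, map_add, map_mul, Complex.conj_conj, ← Complex.mul_conj]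
  ring

theorem stmt_17
    (a : ℤ → ℝ) (b : ℤ → ℝ) (ha : ∀ n, 0 < a n) (lam : ℝ)
    (ψp ψm : ℤ → ℂ)
    (hψp : ∀ n : ℤ, (a n : ℂ) * ψp (n+1) + (a (n-1) : ℂ) * ψp (n-1) + (b n : ℂ) * ψp n
      = (lam : ℂ) * ψp n)
    (hψm : ∀ n : ℤ, (a n : ℂ) * ψm (n+1) + (a (n-1) : ℂ) * ψm (n-1) + (b n : ℂ) * ψm n
      = (lam : ℂ) * ψm n)
    (W : (ℤ → ℂ) → (ℤ → ℂ) → ℂ)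
    (hW : ∀ u v : ℤ → ℂ, W u v = (a 0 : ℂ) * (u 0 * v 1 - u 1 * v 0))
    (hWopp : W ψm (fun n => (starRingEnd ℂ) (ψm n))
      = - W ψp (fun n => (starRingEnd ℂ) (ψp n)))
    (hWne : W ψp (fun n => (starRingEnd ℂ) (ψp n)) ≠ 0)
    (α βp βm : ℂ)
    (hα : α = W ψm ψp / W ψm (fun n => (starRingEnd ℂ) (ψm n)))
    (hβp : βp = W ψm (fun n => (starRingEnd ℂ) (ψp n))
      / W ψp (fun n => (starRingEnd ℂ) (ψp n)))
    (hβm : βm = W ψp (fun n => (starRingEnd ℂ) (ψm n))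
      / W ψm (fun n => (starRingEnd ℂ) (ψm n))) :
    (∀ n : ℤ, ψp n = α * (starRingEnd ℂ) (ψm n) + βm * ψm n) ∧
    (∀ n : ℤ, ψm n = α * (starRingEnd ℂ) (ψp n) + βp * ψp n) ∧
    (starRingEnd ℂ) βp = -βm ∧
    ‖α‖ ^ 2 = 1 + ‖βp‖ ^ 2 ∧
    ‖α‖ ^ 2 = 1 + ‖βm‖ ^ 2 ∧
    1 ≤ ‖α‖ := by
  obtain rfl : W = wronskian (fun n => (a n : ℂ)) := funext₂ hW
  have ha' : ∀ n, (a n : ℂ) ≠ 0 := fun n => Complex.ofReal_ne_zero.mpr (ha n).ne'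
  have hWm : wronskian _ ψm (fun n => conj (ψm n)) ≠ 0 := hWopp ▸ neg_ne_zero.mpr hWne
  have rel1 (n : ℤ) : ψp n = α * conj (ψm n) + βm * ψm n := by
    rw [apply_eq_of_mem_jacobiSolutions ha' hψm (conj_mem_jacobiSolutions hψm) hψp hWm n,
      hα, hβm]
    ring
  have rel2 (n : ℤ) : ψm n = α * conj (ψp n) + βp * ψp n := by
    rw [apply_eq_of_mem_jacobiSolutions ha' hψp (conj_mem_jacobiSolutions hψp) hψm hWne n,
      hα, hβp, hWopp, wronskian_swap _ ψm]
    ring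
  have conj_βp : conj βp = -βm := by
    rw [hβp, hβm, map_div₀, conj_wronskian, conj_wronskian, hWopp]
    simp only [Complex.conj_conj]
    rw [wronskian_swap _ ψp, wronskian_swap _ ψp]
    ring
  have normSq_α : Complex.normSq α = 1 + Complex.normSq βp := by
    have h := wronskian_conj_of_apply_eq (fun n => (a n : ℂ)) α βp rel2
    rw [hWopp] at h
    have h' : ((Complex.normSq α : ℂ) - (1 + Complex.normSq βp)) *
        wronskian (fun n => (a n : ℂ)) ψp (fun n => conj (ψp n)) = 0 := by
      linear_combination h
    exact_mod_cast sub_eq_zero.mp ((mul_eq_zero.mp h').resolve_right hWne)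
  have norm_α : ‖α‖ ^ 2 = 1 + ‖βp‖ ^ 2 := by simpa only [Complex.sq_norm] using normSq_α
  have norm_βm : ‖βm‖ = ‖βp‖ := by rw [← norm_neg, ← conj_βp, Complex.norm_conj]
  refine ⟨rel1, rel2, conj_βp, norm_α, norm_βm ▸ norm_α, ?_⟩
  nlinarith [norm_nonneg α, sq_nonneg ‖βp‖]
end
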